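/- arXiv:2407.07459 — 5 statements merged into one kernel-verified Lean document; each statement's English description precedes it below -/
import Mathlib

section
/- For every subset I ⊆ S and every word b on S, one has pr(b) = pr(π̂_I(b)) · t_I(pr(b)) in W, where pr(π̂_I(b)) ∈ W_I is the product in W of the letters of the word π̂_I(b). -/
open scoped Classical

namespace DGM

variable {S : Type*} {W : Type*} [Group W] {M : CoxeterMatrix S}

/-- The standard parabolic subgroup `W_I` of `W`, generated by the simple
reflections indexed by `I ⊆ S`. -/
def WP (cs : CoxeterSystem M W) (I : Set S) : Subgroup W :=
  Subgroup.closure (cs.simple '' I)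

/-- `w` is `I`-reduced: `ℓ(sw) > ℓ(w)` for every `s ∈ I`. -/
def IsLeftReduced (cs : CoxeterSystem M W) (I : Set S) (w : W) : Prop :=
  ∀ s ∈ I, cs.length w < cs.length (cs.simple s * w)

/-- `t_I(w)`: the unique element of minimal length of the coset `W_I w`. -/
noncomputable def tP (cs : CoxeterSystem M W) (I : Set S) (w : W) : W :=
  Classical.epsilon (fun v =>
    (∃ u ∈ WP cs I, v = u * w) ∧
      ∀ v', (∃ u ∈ WP cs I, v' = u * w) → cs.length v ≤ cs.length v')

/-- `pr` of a word on `S × {±1}` : the product in `W` of its letters. -/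
def prW (cs : CoxeterSystem M W) (b : List (S × Bool)) : W :=
  cs.wordProd (b.map Prod.fst)

/-- Auxiliary function for the retraction; the accumulator `w` is the image in `W`
of the prefix already read (i.e. `w_{j-1}`).  A letter `(s, ε)` is kept (as the
element `i ∈ I` with `simple i = t_I(w_{j-1}) · s · t_I(w_{j-1})⁻¹`, with the sign `ε`)
exactly when the index is good, i.e. when this conjugate lies in `I`. -/
noncomputable def retrAux (cs : CoxeterSystem M W) (I : Set S) :
    W → List (S × Bool) → List (S × Bool)
  | _, [] => []
  | w, p :: rest =>
    (if h : ∃ i ∈ I, cs.simple i = tP cs I w * cs.simple p.1 * (tP cs I w)⁻¹ then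
        [(h.choose, p.2)]
      else []) ++ retrAux cs I (w * cs.simple p.1) rest

/-- The retraction `π̂_I` of a word on `S × {±1}`; its letters lie in `I × {±1}`. -/
noncomputable def retr (cs : CoxeterSystem M W) (I : Set S) (b : List (S × Bool)) :
    List (S × Bool) :=
  retrAux cs I 1 b

/-!
The sign representation of `W` on `W × ℤˣ` (with `s i` acting by `(w, ε) ↦ (s i w s i, ±ε)`,
the sign flipping exactly when `w = s i`) shows that the parity of the number of occurrences of a
reflection in the left inversion sequence of a word depends only on the product of the word. This
gives the exchange property: if `ℓ (s i * π ω) < ℓ (π ω)`, deleting one letter of `ω` yields a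
word for `s i * π ω`. From it one gets reduced words inside `W_I` and the additivity
`ℓ (u * v) = ℓ u + ℓ v` for `u ∈ W_I` and `v` of minimal length in `W_I v`, and then Deodhar's
lemma: for `v = t_I(w)` and a simple reflection `s`, either `v s v⁻¹` is a simple reflection of
`I` and `t_I(w s) = v`, or `t_I(w s) = v s`. Reading the word `b` letter by letter, the good
indices are exactly those of the first kind, so `t_I(w_{j-1}) s_j = (letter of π̂_I(b)) t_I(w_j)`
at every step and the product telescopes.
-/

section

variable (cs : CoxeterSystem M W)

local prefix:100 "s" => cs.simple
local prefix:100 "π" => cs.wordProd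
local prefix:100 "ℓ" => cs.length
local prefix:100 "lis" => cs.leftInvSeq

theorem simple_mul_mul_simple_eq_iff (i : S) (w x : W) :
    s i * w * s i = x ↔ w = s i * x * s i := by
  constructor <;> rintro rfl <;> simp [mul_assoc]

noncomputable def signPerm (i : S) : Equiv.Perm (W × ℤˣ) :=
  Function.Involutive.toPerm (fun p => (s i * p.1 * s i, if p.1 = s i then -p.2 else p.2)) <| by
    rintro ⟨w, ε⟩
    by_cases h : w = s i <;> simp [h, mul_assoc, mul_eq_one_iff_eq_inv]

theorem signPerm_apply (i : S) (w : W) (ε : ℤˣ) :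
    signPerm cs i (w, ε) = (s i * w * s i, if w = s i then -ε else ε) := rfl

theorem signPerm_mul_pow_apply (i j : S) (n : ℕ) (w : W) (ε : ℤˣ) :
    ((signPerm cs i * signPerm cs j) ^ n) (w, ε) =
      ((s i * s j) ^ n * w * ((s i * s j) ^ n)⁻¹,
        (-1) ^ Nat.count (fun l => w = (s j * s i) ^ l * s j) (2 * n) * ε) := by
  induction n generalizing w ε with
  | zero => simp
  | succ n ih =>
    have hconj : ∀ l, s i * (s j * w * s j) * s i = (s j * s i) ^ l * s j ↔
        w = (s j * s i) ^ (2 + l) * s j := by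
      intro l
      rw [simple_mul_mul_simple_eq_iff, simple_mul_mul_simple_eq_iff, add_comm, pow_add, sq]
      simp only [← mul_assoc, (Commute.self_pow (s j * s i) l).eq]
    rw [pow_succ, Equiv.Perm.mul_apply, Equiv.Perm.mul_apply, signPerm_apply, signPerm_apply, ih]
    simp only [hconj, simple_mul_mul_simple_eq_iff]
    rw [show 2 * (n + 1) = 2 + 2 * n by ring, Nat.count_add]
    simp only [Nat.count_succ, Nat.count_zero, pow_zero, pow_one, one_mul, zero_add]
    refine Prod.ext ?_ ?_
    · simp only [pow_succ, mul_inv_rev, cs.inv_simple, mul_assoc]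
    · split_ifs <;> simp [pow_add]

theorem isLiftable_signPerm : M.IsLiftable (signPerm cs) := by
  intro i j
  ext ⟨w, ε⟩ : 1
  set m := M i j
  have hperiodic : ∀ l, w = (s j * s i) ^ (m + l) * s j ↔ w = (s j * s i) ^ l * s j := by
    simp [m, pow_add]
  have heven : Even (Nat.count (fun l => w = (s j * s i) ^ l * s j) (2 * m)) := by
    rw [two_mul, Nat.count_add]
    simp only [hperiodic]
    exact Even.add_self _
  rw [signPerm_mul_pow_apply, cs.simple_mul_simple_pow, heven.neg_one_pow]
  simp

noncomputable def signHom : W →* Equiv.Perm (W × ℤˣ) :=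
  cs.lift ⟨signPerm cs, isLiftable_signPerm cs⟩

theorem signHom_wordProd_inv_apply (ω : List S) (w : W) (ε : ℤˣ) :
    signHom cs (π ω)⁻¹ (w, ε) = ((π ω)⁻¹ * w * π ω, (-1) ^ (lis ω).count w * ε) := by
  induction ω generalizing w ε with
  | nil => simp
  | cons i ω ih =>
    have hcount : (lis (i :: ω)).count w =
        (lis ω).count (s i * w * s i) + if w = s i then 1 else 0 := by
      have hw : MulAut.conj (s i) (s i * w * s i) = w := by simp [mul_assoc]
      rw [CoxeterSystem.leftInvSeq, List.count_cons]
      nth_rewrite 1 [← hw]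
      rw [List.count_map_of_injective _ _ (MulAut.conj (s i)).injective]
      simp [@eq_comm _ (s i) w]
    rw [cs.wordProd_cons, mul_inv_rev, cs.inv_simple, map_mul, Equiv.Perm.mul_apply, signHom,
      cs.lift_apply_simple, signPerm_apply, ← signHom, ih, hcount]
    refine Prod.ext (by simp [mul_assoc]) ?_
    split_ifs <;> simp [pow_succ]

theorem neg_one_pow_count_leftInvSeq_eq {ω ω' : List S} (h : π ω = π ω') (t : W) :
    (-1 : ℤˣ) ^ (lis ω).count t = (-1) ^ (lis ω').count t := by
  have h₁ := signHom_wordProd_inv_apply cs ω t 1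
  rw [h, signHom_wordProd_inv_apply] at h₁
  simpa using (congrArg Prod.snd h₁).symm

theorem simple_mem_leftInvSeq_of_length_lt {ω : List S} {i : S}
    (h : ℓ (s i * π ω) < ℓ (π ω)) : s i ∈ lis ω := by
  obtain ⟨ω₁, hred, hω₁⟩ := cs.exists_isReduced (s i * π ω)
  have hnot : s i ∉ lis ω₁ := fun hmem => by
    have := (cs.isLeftInversion_of_mem_leftInvSeq hred hmem).2
    rw [← hω₁, cs.simple_mul_simple_cancel_left] at this
    omega
  -- `i :: ω₁` is a second word for `π ω`, in whose left inversion sequence `s i` occurs once.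
  have hprod : π (i :: ω₁) = π ω := by
    rw [cs.wordProd_cons, ← hω₁, cs.simple_mul_simple_cancel_left]
  have hcount : (lis (i :: ω₁)).count (s i) = 1 := by
    have hfix : MulAut.conj (s i) (s i) = s i := by simp
    rw [CoxeterSystem.leftInvSeq, List.count_cons]
    nth_rewrite 1 [← hfix]
    rw [List.count_map_of_injective _ _ (MulAut.conj (s i)).injective,
      List.count_eq_zero_of_not_mem hnot]
    simp
  have hparity := neg_one_pow_count_leftInvSeq_eq cs hprod (s i)
  rw [hcount] at hparity
  by_contra hmem
  rw [List.count_eq_zero_of_not_mem hmem] at hparity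
  exact absurd hparity (by decide)

theorem exists_simple_mul_eq_wordProd_eraseIdx {ω : List S} {i : S}
    (h : ℓ (s i * π ω) < ℓ (π ω)) : ∃ k < ω.length, s i * π ω = π (ω.eraseIdx k) := by
  obtain ⟨k, hk, hki⟩ := List.mem_iff_getElem.mp (simple_mem_leftInvSeq_of_length_lt cs h)
  refine ⟨k, cs.length_leftInvSeq ω ▸ hk, ?_⟩
  rw [← cs.getD_leftInvSeq_mul_wordProd, List.getD_eq_getElem _ _ hk, hki]

theorem simple_mul_wordProd_append_cases {α γ : List S} {i : S}
    (h : ℓ (s i * π (α ++ γ)) < ℓ (π (α ++ γ))) :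
    (∃ k < α.length, s i * π α = π (α.eraseIdx k)) ∨
      ∃ k < γ.length, s i * π (α ++ γ) = π α * π (γ.eraseIdx k) := by
  obtain ⟨k, hk, heq⟩ := exists_simple_mul_eq_wordProd_eraseIdx cs h
  rcases lt_or_ge k α.length with hkα | hkα
  · left
    refine ⟨k, hkα, mul_right_cancel (b := π γ) ?_⟩
    rwa [List.eraseIdx_append_of_lt_length hkα, cs.wordProd_append, cs.wordProd_append,
      ← mul_assoc] at heq
  · right
    refine ⟨k - α.length, by simp only [List.length_append] at hk; omega, ?_⟩
    rw [heq, List.eraseIdx_append_of_length_le hkα, cs.wordProd_append]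

theorem exists_isReduced_sublist (ω : List S) :
    ∃ ω' : List S, ω'.Sublist ω ∧ cs.IsReduced ω' ∧ π ω' = π ω := by
  induction ω with
  | nil => exact ⟨[], List.Sublist.refl _, by simp [CoxeterSystem.IsReduced], rfl⟩
  | cons i ω ih =>
    obtain ⟨ω', hsub, hred, hprod⟩ := ih
    rw [CoxeterSystem.IsReduced] at hred
    rcases cs.length_simple_mul (π ω') i with hlen | hlen
    · refine ⟨i :: ω', hsub.cons_cons i, ?_, by rw [cs.wordProd_cons, cs.wordProd_cons, hprod]⟩
      rw [CoxeterSystem.IsReduced, cs.wordProd_cons, hlen, hred, List.length_cons]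
    · obtain ⟨k, hk, heq⟩ := exists_simple_mul_eq_wordProd_eraseIdx cs
        (show ℓ (s i * π ω') < ℓ (π ω') by omega)
      refine ⟨ω'.eraseIdx k, ((List.eraseIdx_sublist _ _).trans hsub).cons i, ?_,
        by rw [cs.wordProd_cons, ← hprod, heq]⟩
      have := List.length_eraseIdx_add_one hk
      rw [CoxeterSystem.IsReduced, ← heq]
      omega

variable (I : Set S)

theorem simple_mem_WP {i : S} (hi : i ∈ I) : s i ∈ WP cs I :=
  Subgroup.subset_closure ⟨i, hi, rfl⟩

theorem wordProd_mem_WP {ω : List S} (hω : ∀ a ∈ ω, a ∈ I) : π ω ∈ WP cs I :=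
  Subgroup.list_prod_mem _ <| by
    simpa [CoxeterSystem.wordProd] using fun a ha => simple_mem_WP cs I (hω a ha)

theorem exists_wordProd_eq_of_mem_WP {w : W} (hw : w ∈ WP cs I) :
    ∃ ω : List S, (∀ a ∈ ω, a ∈ I) ∧ π ω = w := by
  induction hw using Subgroup.closure_induction with
  | mem _ hx =>
    obtain ⟨i, hi, rfl⟩ := hx
    exact ⟨[i], by simpa using hi, cs.wordProd_singleton i⟩
  | one => exact ⟨[], by simp, cs.wordProd_nil⟩
  | mul _ _ _ _ hx hy =>
    obtain ⟨ω₁, h₁, rfl⟩ := hx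
    obtain ⟨ω₂, h₂, rfl⟩ := hy
    exact ⟨ω₁ ++ ω₂, by simpa using fun a ha => ha.elim (h₁ a) (h₂ a), cs.wordProd_append _ _⟩
  | inv _ _ hx =>
    obtain ⟨ω, h, rfl⟩ := hx
    exact ⟨ω.reverse, by simpa using h, cs.wordProd_reverse ω⟩

theorem exists_isReduced_of_mem_WP {w : W} (hw : w ∈ WP cs I) :
    ∃ ω : List S, (∀ a ∈ ω, a ∈ I) ∧ cs.IsReduced ω ∧ π ω = w := by
  obtain ⟨ω, hω, rfl⟩ := exists_wordProd_eq_of_mem_WP cs I hw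
  obtain ⟨ω', hsub, hred, hprod⟩ := exists_isReduced_sublist cs ω
  exact ⟨ω', fun a ha => hω a (hsub.subset ha), hred, hprod⟩

theorem exists_simple_eq_of_mem_WP_of_length_eq_one {u : W} (hu : u ∈ WP cs I)
    (h : ℓ u = 1) : ∃ i ∈ I, s i = u := by
  obtain ⟨β, hβI, hβ, rfl⟩ := exists_isReduced_of_mem_WP cs I hu
  obtain ⟨i, rfl⟩ := List.length_eq_one_iff.mp (hβ.symm.trans h)
  exact ⟨i, hβI i (by simp), (cs.wordProd_singleton i).symm⟩

theorem length_mul_of_forall_length_le {v u : W} (hv : ∀ x ∈ WP cs I, ℓ v ≤ ℓ (x * v))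
    (hu : u ∈ WP cs I) : ℓ (u * v) = ℓ u + ℓ v := by
  obtain ⟨γ, hγ, rfl⟩ := cs.exists_isReduced v
  suffices key : ∀ β : List S, (∀ a ∈ β, a ∈ I) → cs.IsReduced β →
      ℓ (π β * π γ) = β.length + ℓ (π γ) by
    obtain ⟨β, hβI, hβ, rfl⟩ := exists_isReduced_of_mem_WP cs I hu
    rw [key β hβI hβ, hβ]
  intro β hβI hβ
  induction β with
  | nil => simp
  | cons i β ih =>
    have ih := ih (fun a ha => hβI a (List.mem_cons_of_mem _ ha)) (by simpa using hβ.drop 1)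
    rw [CoxeterSystem.IsReduced, List.length_cons] at hβ
    rw [cs.wordProd_cons] at hβ ⊢
    rcases cs.length_simple_mul (π β * π γ) i with hlen | hlen
    · rw [mul_assoc, hlen, ih, List.length_cons]
      omega
    exfalso
    rw [← cs.wordProd_append] at hlen
    have hβ_mem : π β ∈ WP cs I := wordProd_mem_WP cs I fun a ha => hβI a (by simp [ha])
    rcases simple_mul_wordProd_append_cases cs
      (show ℓ (s i * π (β ++ γ)) < ℓ (π (β ++ γ)) by omega) with ⟨k, hk, heq⟩ | ⟨k, hk, heq⟩
    · have hle := cs.length_wordProd_le (β.eraseIdx k)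
      have := List.length_eraseIdx_add_one hk
      rw [← heq, hβ] at hle
      omega
    · have hx : (π β)⁻¹ * s i * π β ∈ WP cs I :=
        mul_mem (mul_mem (inv_mem hβ_mem) (simple_mem_WP cs I (hβI i (by simp)))) hβ_mem
      have hshort : (π β)⁻¹ * s i * π β * π γ = π (γ.eraseIdx k) := by
        rw [mul_assoc, mul_assoc, ← cs.wordProd_append, heq, inv_mul_cancel_left]
      have hmin := hv _ hx
      have hle := cs.length_wordProd_le (γ.eraseIdx k)
      have := List.length_eraseIdx_add_one hk
      rw [hshort, hγ.eq] at hmin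
      omega

theorem tP_spec (w : W) :
    (∃ u ∈ WP cs I, tP cs I w = u * w) ∧
      ∀ v, (∃ u ∈ WP cs I, v = u * w) → ℓ (tP cs I w) ≤ ℓ v := by
  apply Classical.epsilon_spec (p := fun v => (∃ u ∈ WP cs I, v = u * w) ∧
    ∀ v', (∃ u ∈ WP cs I, v' = u * w) → ℓ v ≤ ℓ v')
  obtain ⟨v, hv, hmin⟩ := (InvImage.wf cs.length wellFounded_lt).has_min
    {v | ∃ u ∈ WP cs I, v = u * w} ⟨w, 1, one_mem _, (one_mul w).symm⟩
  exact ⟨v, hv, fun v' hv' => not_lt.mp (hmin v' hv')⟩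

theorem exists_tP_eq_mul (w : W) : ∃ u ∈ WP cs I, tP cs I w = u * w :=
  (tP_spec cs I w).1

theorem length_tP_le_length_mul (w : W) {u : W} (hu : u ∈ WP cs I) :
    ℓ (tP cs I w) ≤ ℓ (u * tP cs I w) := by
  obtain ⟨u₀, hu₀, htP⟩ := exists_tP_eq_mul cs I w
  exact (tP_spec cs I w).2 _ ⟨u * u₀, mul_mem hu hu₀, by rw [htP, mul_assoc]⟩

theorem length_mul_tP (w : W) {u : W} (hu : u ∈ WP cs I) :
    ℓ (u * tP cs I w) = ℓ u + ℓ (tP cs I w) :=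
  length_mul_of_forall_length_le cs I (fun _ hx => length_tP_le_length_mul cs I w hx) hu

theorem tP_one : tP cs I 1 = 1 := by
  have := (tP_spec cs I 1).2 1 ⟨1, one_mem _, by simp⟩
  rwa [cs.length_one, Nat.le_zero, cs.length_eq_zero_iff] at this

theorem tP_mul_left {u : W} (hu : u ∈ WP cs I) (w : W) : tP cs I (u * w) = tP cs I w := by
  have hcoset : ∀ v, (∃ x ∈ WP cs I, v = x * (u * w)) ↔ ∃ x ∈ WP cs I, v = x * w := fun v =>
    ⟨fun ⟨x, hx, h⟩ => ⟨x * u, mul_mem hx hu, by rw [h, mul_assoc]⟩,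
      fun ⟨x, hx, h⟩ => ⟨x * u⁻¹, mul_mem hx (inv_mem hu), by rw [h]; group⟩⟩
  simp only [tP, hcoset]

theorem tP_mul_simple_of_exists {w : W} {j : S}
    (h : ∃ i ∈ I, s i = tP cs I w * s j * (tP cs I w)⁻¹) : tP cs I (w * s j) = tP cs I w := by
  obtain ⟨i, hi, hconj⟩ := h
  obtain ⟨u, hu, htP⟩ := exists_tP_eq_mul cs I w
  have hw : w * s j = (u⁻¹ * s i * u) * w := by
    rw [hconj, htP]
    group
  rw [hw, tP_mul_left cs I (mul_mem (mul_mem (inv_mem hu) (simple_mem_WP cs I hi)) hu)]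

theorem tP_mul_simple_of_not_exists {w : W} {j : S}
    (h : ¬ ∃ i ∈ I, s i = tP cs I w * s j * (tP cs I w)⁻¹) :
    tP cs I (w * s j) = tP cs I w * s j := by
  have hadd (u : W) (hu : u ∈ WP cs I) := length_mul_tP cs I w hu
  obtain ⟨u₁, hu₁, hv⟩ := exists_tP_eq_mul cs I w
  generalize tP cs I w = v at h hv hadd ⊢
  obtain ⟨u, hu, hv's⟩ : ∃ u ∈ WP cs I, tP cs I (w * s j) = u * (v * s j) := by
    obtain ⟨u₂, hu₂, hv'⟩ := exists_tP_eq_mul cs I (w * s j)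
    exact ⟨u₂ * u₁⁻¹, mul_mem hu₂ (inv_mem hu₁), by rw [hv', hv]; group⟩
  have h₁ : ℓ (tP cs I (w * s j) * s j) = ℓ u + ℓ v := by
    rw [hv's, mul_assoc, cs.simple_mul_simple_cancel_right, hadd u hu]
  have h₂ : ℓ (v * s j) = ℓ u + ℓ (tP cs I (w * s j)) := by
    rw [← cs.length_inv u, ← length_mul_tP cs I (w * s j) (inv_mem hu), hv's, inv_mul_cancel_left]
  -- Together with `ℓ (x * s j) = ℓ x ± 1`, `h₁` and `h₂` force `ℓ u ≤ 1`.
  have h₃ := cs.length_mul_simple (tP cs I (w * s j)) j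
  have h₄ := cs.length_mul_simple v j
  by_cases hu1 : u = 1
  · rw [hv's, hu1, one_mul]
  exfalso
  have hℓu : ℓ u = 1 := by
    have := cs.length_eq_zero_iff.not.mpr hu1
    omega
  obtain ⟨i, hi, rfl⟩ := exists_simple_eq_of_mem_WP_of_length_eq_one cs I hu hℓu
  obtain ⟨γ, hγ, rfl⟩ := cs.exists_isReduced v
  have hlt : ℓ (s i * π (γ ++ [j])) < ℓ (π (γ ++ [j])) := by
    rw [cs.wordProd_append, cs.wordProd_singleton, ← hv's]
    omega
  rcases simple_mul_wordProd_append_cases cs hlt with ⟨k, hk, heq⟩ | ⟨k, hk, heq⟩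
  · have hle := cs.length_wordProd_le (γ.eraseIdx k)
    have := List.length_eraseIdx_add_one hk
    have := hadd _ hu
    rw [← heq] at hle
    rw [hγ.eq] at this
    omega
  · obtain rfl : k = 0 := by simpa using hk
    rw [List.eraseIdx_cons_zero, cs.wordProd_nil, mul_one, cs.wordProd_append,
      cs.wordProd_singleton, ← mul_assoc] at heq
    refine h ⟨i, hi, eq_mul_inv_of_mul_eq ?_⟩
    nth_rewrite 2 [← heq]
    simp [mul_assoc]

theorem prW_append (b₁ b₂ : List (S × Bool)) : prW cs (b₁ ++ b₂) = prW cs b₁ * prW cs b₂ := by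
  rw [prW, List.map_append, cs.wordProd_append, prW, prW]

theorem tP_mul_prW (b : List (S × Bool)) (w : W) :
    tP cs I w * prW cs b = prW cs (retrAux cs I w b) * tP cs I (w * prW cs b) := by
  induction b generalizing w with
  | nil => simp [prW, retrAux]
  | cons p b ih =>
    set X := if h : ∃ i ∈ I, s i = tP cs I w * s p.1 * (tP cs I w)⁻¹ then [(h.choose, p.2)]
      else [] with hX
    have hprW : prW cs (p :: b) = s p.1 * prW cs b := cs.wordProd_cons _ _
    have hstep : tP cs I w * s p.1 = prW cs X * tP cs I (w * s p.1) := by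
      rw [hX]
      split_ifs with h
      · rw [tP_mul_simple_of_exists cs I h, prW, List.map_singleton, cs.wordProd_singleton,
          h.choose_spec.2]
        group
      · rw [tP_mul_simple_of_not_exists cs I h, prW, List.map_nil, cs.wordProd_nil, one_mul]
    calc tP cs I w * prW cs (p :: b)
        = prW cs X * (prW cs (retrAux cs I (w * s p.1) b) * tP cs I (w * s p.1 * prW cs b)) := by
          rw [hprW, ← mul_assoc, hstep, mul_assoc, ih]
      _ = prW cs (retrAux cs I w (p :: b)) * tP cs I (w * prW cs (p :: b)) := by
          rw [retrAux, ← hX, prW_append, hprW]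
          simp only [mul_assoc]

end

/-- For every `I ⊆ S` and every word `b` on `S`,
`pr(b) = pr(π̂_I(b)) · t_I(pr(b))` in `W`. -/
theorem pr_retr (cs : CoxeterSystem M W) (I : Set S) (b : List (S × Bool)) :
    prW cs b = prW cs (retr cs I b) * tP cs I (prW cs b) := by
  simpa [retr, tP_one] using tP_mul_prW cs I b 1

end DGM
end

section
/- Let I ⊆ S and let b, b' be words on S such that pr(b) ∈ W_I. Then π̂_I of the concatenation b·b' equals the concatenation of π̂_I(b) and π̂_I(b'). -/
open scoped Classical

namespace DGM

variable {S : Type*} {W : Type*} [Group W] {M : CoxeterMatrix S}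

lemma tP_mul_of_mem (cs : CoxeterSystem M W) (I : Set S) {u : W} (hu : u ∈ WP cs I) (w : W) :
    tP cs I (u * w) = tP cs I w := by
  unfold tP
  have hset : ∀ v : W, (∃ u' ∈ WP cs I, v = u' * (u * w)) ↔ (∃ u' ∈ WP cs I, v = u' * w) := by
    intro v
    constructor
    · rintro ⟨u', hu', rfl⟩
      exact ⟨u' * u, mul_mem hu' hu, by group⟩
    · rintro ⟨u', hu', rfl⟩
      exact ⟨u' * u⁻¹, mul_mem hu' (inv_mem hu), by group⟩
  congr 1
  funext v
  simp only [hset]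

lemma retrAux_mul_of_mem (cs : CoxeterSystem M W) (I : Set S) {u : W} (hu : u ∈ WP cs I) :
    ∀ (l : List (S × Bool)) (w : W), retrAux cs I (u * w) l = retrAux cs I w l := by
  intro l
  induction l with
  | nil => intro w; rfl
  | cons p rest ih =>
    intro w
    simp only [retrAux, tP_mul_of_mem cs I hu, mul_assoc, ih]

lemma retrAux_append (cs : CoxeterSystem M W) (I : Set S) :
    ∀ (b b' : List (S × Bool)) (w : W),
      retrAux cs I w (b ++ b') = retrAux cs I w b ++ retrAux cs I (w * prW cs b) b' := by
  intro b
  induction b with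
  | nil =>
    intro b' w
    simp [retrAux, prW, CoxeterSystem.wordProd]
  | cons p rest ih =>
    intro b' w
    simp only [List.cons_append, retrAux, List.append_eq, ih, List.append_assoc, prW,
      List.map_cons, CoxeterSystem.wordProd_cons, mul_assoc]

/-- If `pr(b) ∈ W_I`, then `π̂_I(b ++ b') = π̂_I(b) ++ π̂_I(b')`. -/
theorem retr_append_of_mem (cs : CoxeterSystem M W) (I : Set S) (b b' : List (S × Bool))
    (h : prW cs b ∈ WP cs I) :
    retr cs I (b ++ b') = retr cs I b ++ retr cs I b' := by
  unfold retr
  rw [retrAux_append, one_mul]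
  congr 1
  have := retrAux_mul_of_mem cs I h b' 1
  rwa [mul_one] at this

end DGM
end

section
/- The intersection of any two parabolic subgroups of W is a parabolic subgroup of W. -/
open scoped Classical

namespace DGM

variable {S : Type*} {W : Type*} [Group W] {M : CoxeterMatrix S}

/-- A parabolic subgroup of `W`: a subgroup of the form `v W_I v⁻¹`. -/
def IsParabolic (cs : CoxeterSystem M W) (H : Subgroup W) : Prop :=
  ∃ (v : W) (I : Set S), H = (WP cs I).map (MulAut.conj v).toMonoidHom

end DGM

/-!
`W` acts on `W × ZMod 2` by `s • (t, ε) = (s t s, ε + [t = s])`. The braid relations hold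
because the inversion sequence of the word `(s s')^m`, `m = M s s'`, is `m`-periodic, so each
reflection occurs in it an even number of times. The second coordinate `η(w, t)` of
`w • (t, 0)` is `1` exactly when `t` is a right inversion of `w`, and
`η(uv, t) = η(v, t) + η(u, v t v⁻¹)`. This cocycle rule shows that the right inversions of an
element of `W_J` lie in `W_J`.

Conjugating, it suffices to treat `W_I ⊓ e W_J e⁻¹` with `e` of minimal length in `e W_J`.
For a right descent `s` of `y ∈ W_J` with `e y e⁻¹ ∈ W_I`, the cocycle rule and the
minimality of `e` give `s ∈ W_J` and `e s e⁻¹ ∈ W_I`; by induction on length,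
`W_I ⊓ e W_J e⁻¹ = e W_K e⁻¹` with `K = {j | s_j ∈ W_J, e s_j e⁻¹ ∈ W_I}`.
-/

namespace CoxeterSystem

open List

variable {B W : Type*} [Group W] {M : CoxeterMatrix B} (cs : CoxeterSystem M W)

noncomputable def reflPerm (i : B) : Equiv.Perm (W × ZMod 2) :=
  Function.Involutive.toPerm
    (fun p ↦ (cs.simple i * p.1 * cs.simple i, p.2 + if p.1 = cs.simple i then 1 else 0)) <| by
    rintro ⟨t, ε⟩
    have h : cs.simple i * t * cs.simple i = cs.simple i ↔ t = cs.simple i := by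
      rw [mul_assoc, mul_eq_left, mul_eq_one_iff_eq_inv, inv_simple]
    ext
    · simp [mul_assoc]
    · simp only [h]
      split_ifs <;> simp [add_assoc, ZModModule.add_self]

theorem reflPerm_apply (i : B) (t : W) (ε : ZMod 2) :
    cs.reflPerm i (t, ε) =
      (cs.simple i * t * cs.simple i, ε + if t = cs.simple i then 1 else 0) :=
  rfl

theorem prod_map_reflPerm_apply (ω : List B) (t : W) (ε : ZMod 2) :
    (ω.map cs.reflPerm).prod (t, ε) =
      (cs.wordProd ω * t * (cs.wordProd ω)⁻¹, ε + (cs.rightInvSeq ω).count t) := by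
  induction ω generalizing t ε with
  | nil => simp
  | cons i ω ih =>
    have h : cs.wordProd ω * t * (cs.wordProd ω)⁻¹ = cs.simple i ↔
        (cs.wordProd ω)⁻¹ * cs.simple i * cs.wordProd ω = t := by
      constructor <;> intro h <;> rw [← h] <;> group
    simp only [map_cons, prod_cons, Equiv.Perm.mul_apply, ih, reflPerm_apply, rightInvSeq,
      count_cons, h, wordProd_cons, beq_iff_eq, mul_inv_rev, inv_simple]
    push_cast
    congr 1
    · group
    · ring

theorem leftInvSeq_eq_map_conj_rightInvSeq (ω : List B) :
    cs.leftInvSeq ω = (cs.rightInvSeq ω).map (MulAut.conj (cs.wordProd ω)) := by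
  induction ω with
  | nil => rfl
  | cons i ω ih =>
    simp [leftInvSeq, rightInvSeq, ih, wordProd_cons, mul_assoc]

theorem wordProd_alternatingWord_add_two_mul (i i' : B) (n : ℕ) :
    cs.wordProd (alternatingWord i i' (n + 2 * M i i')) = cs.wordProd (alternatingWord i i' n) := by
  have hdiv : (n + 2 * M i i') / 2 = n / 2 + M i i' := by omega
  simp only [prod_alternatingWord_eq_mul_pow, Nat.even_add, even_two_mul, iff_true, hdiv, pow_add,
    simple_mul_simple_pow, mul_one]

theorem even_count_leftInvSeq_alternatingWord (i i' : B) (t : W) :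
    Even ((cs.leftInvSeq (alternatingWord i i' (2 * M i i'))).count t) := by
  set l := cs.leftInvSeq (alternatingWord i i' (2 * M i i'))
  have hlen : l.length = 2 * M i i' := by simp [l]
  have hperiod : l.drop (M i i') = l.take (M i i') := by
    refine ext_getElem (by simp [hlen]; omega) fun k h₁ h₂ ↦ ?_
    rw [length_take, hlen] at h₂
    simp only [getElem_drop, getElem_take, l]
    rw [getElem_leftInvSeq_alternatingWord _ _ _ _ _ (by omega),
      getElem_leftInvSeq_alternatingWord _ _ _ _ _ (by omega),
      show 2 * (M i i' + k) + 1 = 2 * k + 1 + 2 * M i' i by rw [M.symmetric]; ring,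
      wordProd_alternatingWord_add_two_mul]
  rw [← take_append_drop (M i i') l, hperiod, count_append]
  exact ⟨_, rfl⟩

theorem prod_map_alternatingWord_two_mul {G : Type*} [Monoid G] (f : B → G) (i i' : B) (m : ℕ) :
    ((alternatingWord i i' (2 * m)).map f).prod = (f i * f i') ^ m := by
  induction m with
  | zero => simp [alternatingWord]
  | succ m ih =>
    rw [show 2 * (m + 1) = 2 * m + 1 + 1 by ring, alternatingWord_succ', alternatingWord_succ',
      if_neg (Nat.not_even_two_mul_add_one m), if_pos (even_two_mul m), map_cons, map_cons,
      prod_cons, prod_cons, ih, ← mul_assoc, pow_succ']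

theorem isLiftable_reflPerm : M.IsLiftable cs.reflPerm := by
  intro i i'
  ext ⟨t, ε⟩ : 1
  have hprod : cs.wordProd (alternatingWord i i' (2 * M i i')) = 1 := by
    simp [wordProd, prod_map_alternatingWord_two_mul]
  rw [← prod_map_alternatingWord_two_mul, prod_map_reflPerm_apply, hprod]
  have hlis := cs.leftInvSeq_eq_map_conj_rightInvSeq (alternatingWord i i' (2 * M i i'))
  rw [hprod, map_one, MulAut.one_def, MulEquiv.coe_refl, map_id] at hlis
  rw [← hlis, (cs.even_count_leftInvSeq_alternatingWord i i' t).natCast_zmod_two]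
  simp

noncomputable def reflRep : W →* Equiv.Perm (W × ZMod 2) :=
  cs.lift ⟨cs.reflPerm, cs.isLiftable_reflPerm⟩

noncomputable def invParity (w t : W) : ZMod 2 :=
  (cs.reflRep w (t, 0)).2

theorem reflRep_wordProd (ω : List B) :
    cs.reflRep (cs.wordProd ω) = (ω.map cs.reflPerm).prod := by
  simp [wordProd, reflRep, map_list_prod, Function.comp_def]

theorem invParity_wordProd (ω : List B) (t : W) :
    cs.invParity (cs.wordProd ω) t = (cs.rightInvSeq ω).count t := by
  simp [invParity, reflRep_wordProd, prod_map_reflPerm_apply]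

theorem reflRep_apply (w t : W) (ε : ZMod 2) :
    cs.reflRep w (t, ε) = (w * t * w⁻¹, ε + cs.invParity w t) := by
  obtain ⟨ω, rfl⟩ := cs.wordProd_surjective w
  rw [reflRep_wordProd, prod_map_reflPerm_apply, invParity_wordProd]

theorem invParity_mul (u v t : W) :
    cs.invParity (u * v) t = cs.invParity v t + cs.invParity u (v * t * v⁻¹) := by
  rw [invParity, map_mul, Equiv.Perm.mul_apply, reflRep_apply, reflRep_apply, zero_add]

theorem invParity_one (t : W) : cs.invParity 1 t = 0 := by
  simp [invParity]

theorem invParity_simple_self (i : B) : cs.invParity (cs.simple i) (cs.simple i) = 1 := by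
  simpa using cs.invParity_wordProd [i] (cs.simple i)

theorem IsReflection.invParity_self {t : W} (ht : cs.IsReflection t) :
    cs.invParity t t = 1 := by
  obtain ⟨u, i, rfl⟩ := ht
  have hconj : u⁻¹ * (u * cs.simple i * u⁻¹) * u = cs.simple i := by group
  have h := cs.invParity_mul u u⁻¹ (u * cs.simple i * u⁻¹)
  rw [mul_inv_cancel, invParity_one, inv_inv, hconj] at h
  rw [invParity_mul, invParity_mul, inv_inv, hconj, mul_inv_cancel_right,
    invParity_simple_self]
  linear_combination -h

theorem mem_rightInvSeq_of_invParity_ne_zero {ω : List B} {t : W}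
    (h : cs.invParity (cs.wordProd ω) t ≠ 0) : t ∈ cs.rightInvSeq ω := by
  by_contra hmem
  rw [invParity_wordProd, count_eq_zero.mpr hmem, Nat.cast_zero] at h
  exact h rfl

theorem isRightInversion_of_invParity_eq_one {w t : W} (h : cs.invParity w t = 1) :
    cs.IsRightInversion w t := by
  obtain ⟨ω, hω, rfl⟩ := cs.exists_isReduced w
  exact cs.isRightInversion_of_mem_rightInvSeq hω
    (cs.mem_rightInvSeq_of_invParity_ne_zero (h ▸ one_ne_zero))

theorem invParity_eq_one_iff {w t : W} :
    cs.invParity w t = 1 ↔ cs.IsRightInversion w t := by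
  refine ⟨cs.isRightInversion_of_invParity_eq_one, fun hwt ↦ Fin.eq_one_of_ne_zero _ ?_⟩
  intro (h0 : cs.invParity w t = 0)
  have ht := hwt.1
  have h1 : cs.invParity (w * t) t = 1 := by
    rw [invParity_mul, ht.invParity_self, mul_inv_cancel_right, h0, add_zero]
  exact ht.not_isRightInversion_mul_left_iff.mpr hwt (cs.isRightInversion_of_invParity_eq_one h1)

theorem invParity_eq_zero_iff {w t : W} :
    cs.invParity w t = 0 ↔ ¬cs.IsRightInversion w t := by
  rw [← invParity_eq_one_iff]
  exact ⟨fun h h1 ↦ zero_ne_one (h.symm.trans h1),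
    fun h ↦ by_contra fun h0 ↦ h (Fin.eq_one_of_ne_zero _ h0)⟩

theorem invParity_inv (w t : W) :
    cs.invParity w⁻¹ t = cs.invParity w (w⁻¹ * t * w) := by
  have h := cs.invParity_mul w w⁻¹ t
  rw [mul_inv_cancel, invParity_one, inv_inv] at h
  rw [← sub_eq_zero, CharTwo.sub_eq_add, h]

theorem exists_minimal_in_leftCoset (H : Subgroup W) (u : W) :
    ∃ e, e⁻¹ * u ∈ H ∧ ∀ y ∈ H, cs.length e ≤ cs.length (e * y) := by
  let f (h : W) := cs.length (u * h)
  set h₀ := Function.argminOn f (H : Set W) ⟨1, H.one_mem⟩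
  have h₀H : h₀ ∈ H := Function.argminOn_mem ..
  refine ⟨u * h₀, by simpa using H.inv_mem h₀H, fun y hy ↦ ?_⟩
  simpa [f, mul_assoc] using Function.not_lt_argminOn f (H : Set W) (H.mul_mem h₀H hy)

end CoxeterSystem

namespace DGM

open CoxeterSystem Pointwise

variable {S : Type*} {W : Type*} [Group W] {M : CoxeterMatrix S}

section

variable (cs : CoxeterSystem M W)

theorem mem_WP_of_invParity_ne_zero {J : Set S} {w t : W} (hw : w ∈ WP cs J)
    (h : cs.invParity w t ≠ 0) : t ∈ WP cs J := by
  induction hw using Subgroup.closure_induction generalizing t with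
  | mem _ hs =>
    obtain ⟨j, hj, rfl⟩ := hs
    rw [← wordProd_singleton] at h
    have hjt : t = cs.simple j := by simpa using cs.mem_rightInvSeq_of_invParity_ne_zero h
    exact hjt ▸ Subgroup.subset_closure ⟨j, hj, rfl⟩
  | one => exact absurd (cs.invParity_one t) h
  | mul x y _ hy ihx ihy =>
    rw [invParity_mul] at h
    by_cases hyt : cs.invParity y t = 0
    · rw [hyt, zero_add] at h
      have := mul_mem (mul_mem (inv_mem hy) (ihx h)) hy
      rwa [show y⁻¹ * (y * t * y⁻¹) * y = t by group] at this
    · exact ihy hyt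
  | inv x hx ihx =>
    rw [invParity_inv] at h
    have := mul_mem (mul_mem hx (ihx h)) (inv_mem hx)
    rwa [show x * (x⁻¹ * t * x) * x⁻¹ = t by group] at this

theorem invParity_eq_zero_of_minimal {J : Set S} {e r : W}
    (he : ∀ y ∈ WP cs J, cs.length e ≤ cs.length (e * y)) (hr : r ∈ WP cs J) :
    cs.invParity e r = 0 :=
  cs.invParity_eq_zero_iff.mpr fun h ↦ (he r hr).not_gt h.2

theorem mem_WP_of_conj_mem {I J : Set S} {e : W}
    (he : ∀ y ∈ WP cs J, cs.length e ≤ cs.length (e * y)) {y : W} (hy : y ∈ WP cs J)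
    (hey : e * y * e⁻¹ ∈ WP cs I) :
    y ∈ WP cs {j | cs.simple j ∈ WP cs J ∧ e * cs.simple j * e⁻¹ ∈ WP cs I} := by
  induction h : cs.length y using Nat.strong_induction_on generalizing y with
  | _ n ih =>
  obtain rfl | hy1 := eq_or_ne y 1
  · exact one_mem _
  obtain ⟨j, hj⟩ := cs.exists_rightDescent_of_ne_one hy1
  have hys : cs.invParity y (cs.simple j) = 1 :=
    cs.invParity_eq_one_iff.mpr ⟨cs.isReflection_simple j, hj⟩
  have hsJ : cs.simple j ∈ WP cs J := mem_WP_of_invParity_ne_zero cs hy (by simp [hys])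
  have hes : cs.invParity e (cs.simple j) = 0 := invParity_eq_zero_of_minimal cs he hsJ
  have hey_s : cs.invParity (e * y) (cs.simple j) = 1 := by
    rw [invParity_mul, hys, invParity_eq_zero_of_minimal cs he
      (mul_mem (mul_mem hy hsJ) (inv_mem hy)), add_zero]
  have hconj : cs.invParity (e * y * e⁻¹) (e * cs.simple j * e⁻¹) = 1 := by
    have := cs.invParity_mul (e * y * e⁻¹) e (cs.simple j)
    rwa [inv_mul_cancel_right, hey_s, hes, zero_add, eq_comm] at this
  have hsI : e * cs.simple j * e⁻¹ ∈ WP cs I :=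
    mem_WP_of_invParity_ne_zero cs hey (by simp [hconj])
  have hys_mem := ih _ (h ▸ hj) (mul_mem hy hsJ) (by
    rw [show e * (y * cs.simple j) * e⁻¹ = e * y * e⁻¹ * (e * cs.simple j * e⁻¹) by group]
    exact mul_mem hey hsI) rfl
  simpa using mul_mem hys_mem (Subgroup.subset_closure ⟨j, ⟨hsJ, hsI⟩, rfl⟩)

theorem WP_inf_conj_smul_WP {I J : Set S} {e : W}
    (he : ∀ y ∈ WP cs J, cs.length e ≤ cs.length (e * y)) :
    WP cs I ⊓ MulAut.conj e • WP cs J =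
      MulAut.conj e •
        WP cs {j | cs.simple j ∈ WP cs J ∧ e * cs.simple j * e⁻¹ ∈ WP cs I} := by
  refine le_antisymm ?_ (le_inf ?_ (Subgroup.pointwise_smul_le_pointwise_smul_iff.mpr ?_))
  · rintro _ ⟨hI, y, hy, rfl⟩
    exact ⟨y, mem_WP_of_conj_mem cs he hy hI, rfl⟩
  · rw [Subgroup.pointwise_smul_subset_iff, WP, Subgroup.closure_le]
    rintro _ ⟨j, hj, rfl⟩
    exact ⟨_, hj.2, by simp [mul_assoc]⟩
  · rw [WP, Subgroup.closure_le]
    rintro _ ⟨j, hj, rfl⟩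
    exact hj.1

end

/-- The intersection of any two parabolic subgroups of `W` is a parabolic subgroup. -/
theorem isParabolic_inf (cs : CoxeterSystem M W) (P Q : Subgroup W)
    (hP : IsParabolic cs P) (hQ : IsParabolic cs Q) :
    IsParabolic cs (P ⊓ Q) := by
  obtain ⟨v, I, rfl⟩ := hP
  obtain ⟨w, J, rfl⟩ := hQ
  obtain ⟨e, hew, he⟩ := cs.exists_minimal_in_leftCoset (WP cs J) (v⁻¹ * w)
  change IsParabolic cs (MulAut.conj v • WP cs I ⊓ MulAut.conj w • WP cs J)
  rw [show w = v * e * (e⁻¹ * (v⁻¹ * w)) by group, map_mul, map_mul, mul_smul, mul_smul,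
    Subgroup.conj_smul_eq_self_of_mem hew, ← Subgroup.smul_inf, WP_inf_conj_smul_WP cs he,
    ← mul_smul, ← map_mul]
  exact ⟨v * e, _, rfl⟩

end DGM
end

section
/- Let Q be a parabolic subgroup of W and let D = v W_K v⁻¹ be a parabolic subgroup with |K| = 2 (a dihedral parabolic subgroup). Then the set T ∩ Q ∩ D is either empty, or consists of a single reflection, or equals T ∩ D (the set of all reflections of D). -/
open scoped Classical

namespace DGM

variable {S : Type*} {W : Type*} [Group W] {M : CoxeterMatrix S}

/-- The set `T` of reflections of `W`. -/
def Refl (cs : CoxeterSystem M W) : Set W := {t | cs.IsReflection t}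

/-!
We work in the geometric representation `σ : W → GL(V)` on `V = ⊕ₛ ℝ αₛ`, with invariant form
`B(αₛ, αₜ) = -cos (π / mₛₜ)`. By induction on length, every root `σ(w) αₛ` has all coordinates of
one sign, according to whether `s` is a right descent of `w`. Consequently `σ` is faithful, and a
reflection `w s w⁻¹` lies in `z W_I z⁻¹` exactly when its root `σ(w) αₛ` lies in
`σ(z) (span {αᵢ | i ∈ I})` (Kilmoyer). Distinct reflections have non-proportional roots, and the
roots of the reflections of `D` lie in the plane `σ(v) (span {αₐ, α_b})`. So two distinct
reflections in `Q ∩ D` already have roots spanning that plane, which then lies in the root space of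
`Q`, and every reflection of `D` belongs to `Q`.
-/

open CoxeterSystem Polynomial.Chebyshev

noncomputable section

lemma span_pair_eq_of_linearIndependent {K V : Type*} [Field K] [AddCommGroup V] [Module K V]
    {p q x y : V} (hx : x ∈ Submodule.span K {p, q}) (hy : y ∈ Submodule.span K {p, q})
    (hxy : LinearIndependent K ![x, y]) : Submodule.span K {x, y} = Submodule.span K {p, q} := by
  have : Module.Finite K (Submodule.span K {p, q}) := Module.Finite.span_of_finite K (by simp)
  apply Submodule.eq_of_le_of_finrank_le
  · exact Submodule.span_le.mpr (Set.insert_subset hx (Set.singleton_subset_iff.mpr hy))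
  · have h2 := finrank_span_eq_card hxy
    rw [Matrix.range_cons_cons_empty] at h2
    rw [h2]
    exact (finrank_span_le_card _).trans (by simpa using Finset.card_le_two)

/-! ### Chebyshev polynomials at `cos (π / m)` -/

/-- An entry `M i j = 0` stands for `m = ∞`, whose cosine is taken to be `1`. -/
def coxeterCos (M : CoxeterMatrix S) (i j : S) : ℝ :=
  if M i j = 0 then 1 else Real.cos (Real.pi / M i j)

lemma coxeterCos_symm (i j : S) : coxeterCos M i j = coxeterCos M j i := by
  rw [coxeterCos, coxeterCos, M.symmetric]

@[simp] lemma coxeterCos_self (i : S) : coxeterCos M i i = -1 := by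
  simp [coxeterCos]

lemma sin_pi_div_pos {i j : S} (hij : i ≠ j) (h0 : M i j ≠ 0) :
    0 < Real.sin (Real.pi / M i j) := by
  have h2 : (2 : ℝ) ≤ M i j := by
    have := M.off_diagonal i j hij
    exact_mod_cast (by omega : 2 ≤ M i j)
  apply Real.sin_pos_of_pos_of_lt_pi (by positivity)
  rw [div_lt_iff₀ (by linarith)]
  nlinarith [Real.pi_pos]

lemma U_eval_coxeterCos_mul_sin {i j : S} (h0 : M i j ≠ 0) (n : ℤ) :
    (U ℝ n).eval (coxeterCos M i j) * Real.sin (Real.pi / M i j) =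
      Real.sin ((n + 1) * (Real.pi / M i j)) := by
  rw [coxeterCos, if_neg h0, U_real_cos]

lemma U_eval_coxeterCos_nonneg {i j : S} (hij : i ≠ j) {n : ℤ} (hn : -1 ≤ n)
    (hm : M i j = 0 ∨ n < M i j) : 0 ≤ (U ℝ n).eval (coxeterCos M i j) := by
  have hn' : (0 : ℝ) ≤ n + 1 := by exact_mod_cast (by omega : (0 : ℤ) ≤ n + 1)
  by_cases h0 : M i j = 0
  · rwa [coxeterCos, if_pos h0, U_eval_one]
  have hnm : (n + 1 : ℝ) ≤ M i j := by exact_mod_cast (by omega : n + 1 ≤ (M i j : ℤ))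
  refine nonneg_of_mul_nonneg_left ?_ (sin_pi_div_pos hij h0)
  rw [U_eval_coxeterCos_mul_sin h0]
  apply Real.sin_nonneg_of_nonneg_of_le_pi (mul_nonneg hn' (by positivity))
  rw [← mul_div_assoc, div_le_iff₀ (by positivity)]
  nlinarith [Real.pi_pos]

lemma coxeterCos_sq_lt_one {i j : S} (hij : i ≠ j) (h0 : M i j ≠ 0) :
    coxeterCos M i j ^ 2 < 1 := by
  have := sin_pi_div_pos hij h0
  rw [coxeterCos, if_neg h0]
  nlinarith [Real.sin_sq_add_cos_sq (Real.pi / M i j)]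

lemma U_eval_coxeterCos_two_mul {i j : S} (hij : i ≠ j) (h0 : M i j ≠ 0) :
    (U ℝ (2 * M i j)).eval (coxeterCos M i j) = 1 := by
  have h := U_eval_coxeterCos_mul_sin h0 (2 * M i j)
  have hM : (M i j : ℝ) ≠ 0 := by exact_mod_cast h0
  rw [show ((2 * M i j : ℤ) + 1 : ℝ) * (Real.pi / M i j) = Real.pi / M i j + 2 * Real.pi by
    push_cast; field_simp; ring, Real.sin_add_two_pi] at h
  exact (mul_eq_right₀ (sin_pi_div_pos hij h0).ne').mp h

lemma U_eval_coxeterCos_two_mul_sub_one {i j : S} (hij : i ≠ j) (h0 : M i j ≠ 0) :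
    (U ℝ (2 * M i j - 1)).eval (coxeterCos M i j) = 0 := by
  have h := U_eval_coxeterCos_mul_sin h0 (2 * M i j - 1)
  have hM : (M i j : ℝ) ≠ 0 := by exact_mod_cast h0
  rw [show ((2 * M i j - 1 : ℤ) + 1 : ℝ) * (Real.pi / M i j) = 2 * Real.pi by
    push_cast; field_simp; ring, Real.sin_two_pi] at h
  exact (mul_eq_zero.mp h).resolve_right (sin_pi_div_pos hij h0).ne'

/-! ### The geometric representation -/

def simpleRoot (i : S) : S →₀ ℝ := Finsupp.single i 1

lemma simpleRoot_mem_supported {I : Set S} {i : S} (hi : i ∈ I) :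
    simpleRoot i ∈ Finsupp.supported ℝ ℝ I :=
  Finsupp.single_mem_supported ℝ 1 hi

variable (M) in
def bform : (S →₀ ℝ) →ₗ[ℝ] (S →₀ ℝ) →ₗ[ℝ] ℝ :=
  Finsupp.lift _ ℝ S fun i => Finsupp.lift ℝ ℝ S fun j => -coxeterCos M i j

@[simp] lemma bform_simpleRoot (i j : S) :
    bform M (simpleRoot i) (simpleRoot j) = -coxeterCos M i j := by
  simp [bform, simpleRoot]

lemma bform_comm (v w : S →₀ ℝ) : bform M v w = bform M w v := by
  suffices (bform M).flip = bform M from LinearMap.congr_fun₂ this w v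
  ext i j
  simp [bform, coxeterCos_symm j i]

variable (M) in
def simpleRefl (i : S) : (S →₀ ℝ) ≃ₗ[ℝ] (S →₀ ℝ) :=
  Module.reflection (f := 2 • (bform M).flip (simpleRoot i)) (x := simpleRoot i) (by simp)

lemma simpleRefl_apply (i : S) (v : S →₀ ℝ) :
    simpleRefl M i v = v - (2 * bform M v (simpleRoot i)) • simpleRoot i := by
  simp [simpleRefl, Module.reflection_apply]

lemma simpleRefl_simpleRoot (i j : S) :
    simpleRefl M i (simpleRoot j) = simpleRoot j + (2 * coxeterCos M i j) • simpleRoot i := by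
  rw [simpleRefl_apply, bform_simpleRoot, coxeterCos_symm]
  module

lemma simpleRefl_simpleRoot_self (i : S) : simpleRefl M i (simpleRoot i) = -simpleRoot i := by
  rw [simpleRefl_simpleRoot, coxeterCos_self]
  module

@[simp] lemma simpleRefl_inv (i : S) : (simpleRefl M i)⁻¹ = simpleRefl M i :=
  Module.reflection_inv _

lemma bform_simpleRefl (i : S) (v w : S →₀ ℝ) :
    bform M (simpleRefl M i v) (simpleRefl M i w) = bform M v w := by
  simp only [simpleRefl_apply, map_sub, map_smul, LinearMap.sub_apply, LinearMap.smul_apply,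
    smul_eq_mul, bform_simpleRoot, coxeterCos_self, bform_comm (simpleRoot i) w]
  ring

lemma simpleRefl_smul_add_smul (i j : S) (a b : ℝ) :
    simpleRefl M j (a • simpleRoot i + b • simpleRoot j) =
      a • simpleRoot i + (2 * coxeterCos M i j * a - b) • simpleRoot j := by
  rw [map_add, map_smul, map_smul, simpleRefl_simpleRoot, simpleRefl_simpleRoot_self,
    coxeterCos_symm]
  module

lemma U_eval_add_one (n : ℤ) (x : ℝ) :
    (U ℝ (n + 1)).eval x = 2 * x * (U ℝ n).eval x - (U ℝ (n - 1)).eval x := by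
  simp [U_add_one]

lemma simpleRefl_mul_pow_apply_simpleRoot (i j : S) (k : ℕ) :
    ((simpleRefl M i * simpleRefl M j) ^ k) (simpleRoot i) =
      (U ℝ (2 * k)).eval (coxeterCos M i j) • simpleRoot i +
        (U ℝ (2 * k - 1)).eval (coxeterCos M i j) • simpleRoot j := by
  induction k with
  | zero => simp
  | succ k ih =>
    rw [pow_succ', LinearEquiv.mul_apply, ih, LinearEquiv.mul_apply, simpleRefl_smul_add_smul,
      add_comm, simpleRefl_smul_add_smul, coxeterCos_symm j i]
    push_cast
    rw [show 2 * ((k : ℤ) + 1) - 1 = 2 * k + 1 by ring,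
      show 2 * ((k : ℤ) + 1) = 2 * k + 1 + 1 by ring, U_eval_add_one (2 * k + 1),
      U_eval_add_one (2 * k), add_sub_cancel_right]
    module

lemma sub_mem_supported_of_mem_closure {I : Set S} {g : (S →₀ ℝ) ≃ₗ[ℝ] (S →₀ ℝ)}
    (hg : g ∈ Subgroup.closure (simpleRefl M '' I)) (v : S →₀ ℝ) :
    g v - v ∈ Finsupp.supported ℝ ℝ I := by
  induction hg using Subgroup.closure_induction generalizing v with
  | mem g hg =>
    obtain ⟨i, hi, rfl⟩ := hg
    rw [simpleRefl_apply, sub_sub_cancel_left]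
    exact neg_mem (Submodule.smul_mem _ _ (simpleRoot_mem_supported hi))
  | one => simp
  | mul g h _ _ hg hh =>
    simpa [LinearEquiv.mul_apply] using add_mem (hg (h v)) (hh v)
  | inv g _ hg =>
    simpa using neg_mem (hg (g.symm v))

lemma bform_apply_of_mem_closure {g : (S →₀ ℝ) ≃ₗ[ℝ] (S →₀ ℝ)}
    (hg : g ∈ Subgroup.closure (Set.range (simpleRefl M))) (v w : S →₀ ℝ) :
    bform M (g v) (g w) = bform M v w := by
  induction hg using Subgroup.closure_induction generalizing v w with
  | mem g hg =>
    obtain ⟨i, rfl⟩ := hg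
    exact bform_simpleRefl i v w
  | one => rfl
  | mul g h _ _ hg hh => rw [LinearEquiv.mul_apply, LinearEquiv.mul_apply, hg, hh]
  | inv g _ hg => rw [← hg, LinearEquiv.coe_inv, g.apply_symm_apply, g.apply_symm_apply]

lemma eq_smul_add_smul_of_mem_supported_pair {i j : S} (hij : i ≠ j) {p : S →₀ ℝ}
    (hp : p ∈ Finsupp.supported ℝ ℝ {i, j}) : p = p i • simpleRoot i + p j • simpleRoot j := by
  ext c
  rcases eq_or_ne c i with rfl | hci
  · simp [simpleRoot, hij.symm]
  rcases eq_or_ne c j with rfl | hcj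
  · simp [simpleRoot, hij]
  have := (Finsupp.mem_supported' ℝ p).mp hp c (by simp [hci, hcj])
  simp [simpleRoot, hci.symm, hcj.symm, this]

lemma eq_zero_of_mem_supported_pair {i j : S} (hij : i ≠ j) (h0 : M i j ≠ 0) {p : S →₀ ℝ}
    (hp : p ∈ Finsupp.supported ℝ ℝ {i, j}) (hi : bform M p (simpleRoot i) = 0)
    (hj : bform M p (simpleRoot j) = 0) : p = 0 := by
  rw [eq_smul_add_smul_of_mem_supported_pair hij hp] at hi hj ⊢
  simp only [map_add, map_smul, LinearMap.add_apply, LinearMap.smul_apply, bform_simpleRoot,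
    coxeterCos_self, smul_eq_mul, coxeterCos_symm j i] at hi hj
  have hc : 1 - coxeterCos M i j ^ 2 ≠ 0 := by linarith [coxeterCos_sq_lt_one hij h0]
  have hpi : p i * (1 - coxeterCos M i j ^ 2) = 0 := by
    linear_combination hi + coxeterCos M i j * hj
  have hpj : p j * (1 - coxeterCos M i j ^ 2) = 0 := by
    linear_combination coxeterCos M i j * hi + hj
  simp [(mul_eq_zero.mp hpi).resolve_right hc, (mul_eq_zero.mp hpj).resolve_right hc]

lemma simpleRefl_mul_pow_coxeter_apply_simpleRoot {i j : S} (hij : i ≠ j) :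
    ((simpleRefl M i * simpleRefl M j) ^ M i j) (simpleRoot i) = simpleRoot i := by
  by_cases h0 : M i j = 0
  · simp [h0]
  rw [simpleRefl_mul_pow_apply_simpleRoot, U_eval_coxeterCos_two_mul hij h0,
    U_eval_coxeterCos_two_mul_sub_one hij h0]
  simp

/-- `g = (rᵢ rⱼ)^m` fixes `αᵢ` and `αⱼ`, preserves `B`, and moves every vector inside
`span {αᵢ, αⱼ}`, on which `B` is nondegenerate; so `g v - v` is `B`-orthogonal to that plane
and vanishes. -/
lemma simpleRefl_mul_pow_coxeter (i j : S) : (simpleRefl M i * simpleRefl M j) ^ M i j = 1 := by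
  rcases eq_or_ne i j with rfl | hij
  · rw [M.diagonal, pow_one]
    nth_rewrite 1 [← simpleRefl_inv]
    exact inv_mul_cancel _
  by_cases h0 : M i j = 0
  · simp [h0]
  set g := (simpleRefl M i * simpleRefl M j) ^ M i j
  have hg : g ∈ Subgroup.closure (simpleRefl M '' {i, j}) :=
    pow_mem (mul_mem (Subgroup.subset_closure (Set.mem_image_of_mem _ (by simp)))
      (Subgroup.subset_closure (Set.mem_image_of_mem _ (by simp)))) _
  have hgi : g (simpleRoot i) = simpleRoot i := simpleRefl_mul_pow_coxeter_apply_simpleRoot hij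
  have hgj : g (simpleRoot j) = simpleRoot j := by
    have hinv : g⁻¹ = (simpleRefl M j * simpleRefl M i) ^ M j i := by
      rw [← inv_pow, mul_inv_rev, simpleRefl_inv, simpleRefl_inv, M.symmetric]
    have := simpleRefl_mul_pow_coxeter_apply_simpleRoot (M := M) hij.symm
    rwa [← hinv, LinearEquiv.coe_inv, LinearEquiv.symm_apply_eq, eq_comm] at this
  have hB (v : S →₀ ℝ) {a : S} (ha : g (simpleRoot a) = simpleRoot a) :
      bform M (g v - v) (simpleRoot a) = 0 := by
    rw [map_sub, LinearMap.sub_apply, ← ha,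
      bform_apply_of_mem_closure (Subgroup.closure_mono (Set.image_subset_range _ _) hg), ha,
      sub_self]
  ext v : 1
  exact sub_eq_zero.mp (eq_zero_of_mem_supported_pair hij h0
    (sub_mem_supported_of_mem_closure hg v) (hB v hgi) (hB v hgj))

variable (cs : CoxeterSystem M W)

def geomRep : W →* ((S →₀ ℝ) ≃ₗ[ℝ] (S →₀ ℝ)) :=
  cs.lift ⟨simpleRefl M, simpleRefl_mul_pow_coxeter⟩

@[simp] lemma geomRep_simple (i : S) : geomRep cs (cs.simple i) = simpleRefl M i :=
  cs.lift_apply_simple _ i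

lemma geomRep_mem_closure {I : Set S} {x : W} (hx : x ∈ WP cs I) :
    geomRep cs x ∈ Subgroup.closure (simpleRefl M '' I) := by
  have := Subgroup.mem_map_of_mem (geomRep cs) hx
  rwa [WP, MonoidHom.map_closure, Set.image_image, funext (geomRep_simple cs)] at this

lemma geomRep_sub_mem_supported {I : Set S} {x : W} (hx : x ∈ WP cs I) (v : S →₀ ℝ) :
    geomRep cs x v - v ∈ Finsupp.supported ℝ ℝ I :=
  sub_mem_supported_of_mem_closure (geomRep_mem_closure cs hx) v

lemma geomRep_mem_supported {I : Set S} {x : W} (hx : x ∈ WP cs I) {v : S →₀ ℝ}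
    (hv : v ∈ Finsupp.supported ℝ ℝ I) : geomRep cs x v ∈ Finsupp.supported ℝ ℝ I := by
  simpa using add_mem (geomRep_sub_mem_supported cs hx v) hv

lemma bform_geomRep (w : W) (v u : S →₀ ℝ) :
    bform M (geomRep cs w v) (geomRep cs w u) = bform M v u := by
  have hw : w ∈ WP cs Set.univ := by simp [WP, cs.subgroup_closure_range_simple]
  exact bform_apply_of_mem_closure (by simpa using geomRep_mem_closure cs hw) v u

lemma geomRep_mul_simple_simpleRoot (w : W) (i : S) :
    geomRep cs (w * cs.simple i) (simpleRoot i) = -geomRep cs w (simpleRoot i) := by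
  rw [map_mul, LinearEquiv.mul_apply, geomRep_simple, simpleRefl_simpleRoot_self, map_neg]

lemma geomRep_conj_simple_apply (w : W) (c : S) (v : S →₀ ℝ) :
    geomRep cs (w * cs.simple c * w⁻¹) v =
      v - (2 * bform M v (geomRep cs w (simpleRoot c))) • geomRep cs w (simpleRoot c) := by
  have hB : bform M (geomRep cs w⁻¹ v) (simpleRoot c) =
      bform M v (geomRep cs w (simpleRoot c)) := by
    rw [← bform_geomRep cs w, ← LinearEquiv.mul_apply, ← map_mul, mul_inv_cancel, map_one]
    rfl
  rw [map_mul, map_mul, LinearEquiv.mul_apply, LinearEquiv.mul_apply, geomRep_simple,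
    simpleRefl_apply, hB, map_sub, map_smul, ← LinearEquiv.mul_apply, ← map_mul, mul_inv_cancel,
    map_one]
  rfl

/-! ### Alternating products and positivity of roots -/

def alternatingProd (a b : S) (k : ℕ) : W := cs.wordProd (alternatingWord a b k)

@[simp] lemma alternatingProd_zero (a b : S) : alternatingProd cs a b 0 = 1 := rfl

lemma alternatingProd_succ (a b : S) (k : ℕ) :
    alternatingProd cs a b (k + 1) = alternatingProd cs b a k * cs.simple b := by
  rw [alternatingProd, alternatingWord_succ, wordProd_concat, alternatingProd]

lemma length_alternatingProd_le (a b : S) (k : ℕ) : cs.length (alternatingProd cs a b k) ≤ k := by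
  simpa [alternatingProd] using cs.length_wordProd_le (alternatingWord a b k)

lemma alternatingProd_two_mul (a b : S) (k : ℕ) :
    alternatingProd cs a b (2 * k) = (cs.simple a * cs.simple b) ^ k := by
  simp [alternatingProd, prod_alternatingWord_eq_mul_pow]

lemma alternatingProd_two_mul_add_one (a b : S) (k : ℕ) :
    alternatingProd cs a b (2 * k + 1) = cs.simple b * (cs.simple a * cs.simple b) ^ k := by
  simp [alternatingProd, prod_alternatingWord_eq_mul_pow, Nat.add_div]

lemma geomRep_alternatingProd_two_mul_simpleRoot (a b : S) (k : ℕ) :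
    geomRep cs (alternatingProd cs a b (2 * k)) (simpleRoot a) =
      (U ℝ (2 * k)).eval (coxeterCos M a b) • simpleRoot a +
        (U ℝ (2 * k - 1)).eval (coxeterCos M a b) • simpleRoot b := by
  rw [alternatingProd_two_mul, map_pow, map_mul, geomRep_simple, geomRep_simple,
    simpleRefl_mul_pow_apply_simpleRoot]

lemma geomRep_alternatingProd_two_mul_add_one_simpleRoot (a b : S) (k : ℕ) :
    geomRep cs (alternatingProd cs a b (2 * k + 1)) (simpleRoot a) =
      (U ℝ (2 * k)).eval (coxeterCos M a b) • simpleRoot a +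
        (U ℝ (2 * k + 1)).eval (coxeterCos M a b) • simpleRoot b := by
  rw [alternatingProd_two_mul_add_one, map_mul, LinearEquiv.mul_apply, ← alternatingProd_two_mul,
    geomRep_alternatingProd_two_mul_simpleRoot, geomRep_simple, simpleRefl_smul_add_smul,
    U_eval_add_one]

lemma simpleRoot_nonneg (i : S) : 0 ≤ simpleRoot i := Finsupp.single_nonneg.mpr zero_le_one

lemma geomRep_alternatingProd_simpleRoot_nonneg {a b : S} (hab : a ≠ b) {k : ℕ}
    (hk : M a b = 0 ∨ k < M a b) : 0 ≤ geomRep cs (alternatingProd cs a b k) (simpleRoot a) := by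
  have hU {n : ℤ} (h1 : -1 ≤ n) (h2 : n ≤ k) : 0 ≤ (U ℝ n).eval (coxeterCos M a b) :=
    U_eval_coxeterCos_nonneg hab h1 (by omega)
  obtain ⟨l, rfl | rfl⟩ := Nat.even_or_odd' k
  · rw [geomRep_alternatingProd_two_mul_simpleRoot]
    exact add_nonneg (smul_nonneg (hU (by omega) (by omega)) (simpleRoot_nonneg a))
      (smul_nonneg (hU (by omega) (by omega)) (simpleRoot_nonneg b))
  · rw [geomRep_alternatingProd_two_mul_add_one_simpleRoot]
    exact add_nonneg (smul_nonneg (hU (by omega) (by omega)) (simpleRoot_nonneg a))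
      (smul_nonneg (hU (by omega) (by omega)) (simpleRoot_nonneg b))

lemma isRightDescent_alternatingProd_succ {a b : S} {k : ℕ}
    (h : cs.length (alternatingProd cs a b (k + 1)) = k + 1) :
    cs.IsRightDescent (alternatingProd cs a b (k + 1)) b := by
  rw [IsRightDescent, h, alternatingProd_succ, simple_mul_simple_cancel_right]
  exact Nat.lt_succ_of_le (length_alternatingProd_le cs b a k)

lemma lt_coxeter_of_not_isRightDescent {a b : S} {k : ℕ}
    (hlen : cs.length (alternatingProd cs a b k) = k)
    (hnd : ¬ cs.IsRightDescent (alternatingProd cs a b k) a) : M a b = 0 ∨ k < M a b := by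
  by_contra! h
  rcases h.2.lt_or_eq with hlt | rfl
  · exact cs.not_isReduced_alternatingWord a b h.1 hlt
      (by rwa [CoxeterSystem.IsReduced, length_alternatingWord])
  · obtain ⟨m, hm⟩ := Nat.exists_eq_succ_of_ne_zero h.1
    have hbraid : alternatingProd cs a b (M a b) = alternatingProd cs b a (M a b) := by
      have := cs.wordProd_braidWord_eq a b
      rwa [braidWord, braidWord, M.symmetric b a] at this
    rw [hbraid, hm] at hnd hlen
    exact hnd (isRightDescent_alternatingProd_succ cs hlen)

lemma alternatingProd_mul_simple {a b c : S} (hc : c = a ∨ c = b) {k : ℕ}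
    (hlen : k < cs.length (alternatingProd cs a b k * cs.simple c)) :
    alternatingProd cs a b k * cs.simple c = alternatingProd cs b a (k + 1) ∨
      alternatingProd cs a b k * cs.simple c = alternatingProd cs a b (k + 1) := by
  rcases hc with rfl | rfl
  · exact Or.inl (alternatingProd_succ cs _ _ k).symm
  · right
    cases k with
    | zero => simp [alternatingProd_succ]
    | succ k =>
      rw [alternatingProd_succ, simple_mul_simple_cancel_right] at hlen
      exact absurd (length_alternatingProd_le cs c a k) (by omega)

lemma eq_alternatingProd_of_forall_isRightDescent {i j : S} {n : ℕ}
    (hdesc : ∀ y ∈ WP cs {i, j}, cs.length y ≤ n → ∀ c, cs.IsRightDescent y c → c = i ∨ c = j)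
    {x : W} (hx : x ∈ WP cs {i, j}) (hn : cs.length x ≤ n) :
    x = alternatingProd cs i j (cs.length x) ∨ x = alternatingProd cs j i (cs.length x) := by
  obtain ⟨m, hm⟩ : ∃ m, cs.length x = m := ⟨_, rfl⟩
  rw [hm]
  induction m using Nat.strong_induction_on generalizing x with
  | _ m ih =>
  rcases eq_or_ne x 1 with rfl | hx1
  · rw [cs.length_one] at hm
    subst hm
    simp
  obtain ⟨c, hc⟩ := cs.exists_rightDescent_of_ne_one hx1
  have hci := hdesc x hx hn c hc
  have hxc : x * cs.simple c ∈ WP cs {i, j} := mul_mem hx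
    (Subgroup.subset_closure (Set.mem_image_of_mem _ (by rcases hci with rfl | rfl <;> simp)))
  obtain ⟨k, hk⟩ : ∃ k, cs.length (x * cs.simple c) = k := ⟨_, rfl⟩
  have hmk : m = k + 1 := by have := cs.isRightDescent_iff.mp hc; omega
  have hx' : x = x * cs.simple c * cs.simple c := (cs.simple_mul_simple_cancel_right c).symm
  rcases ih k (by omega) hxc (by omega) hk with e | e <;> rw [e] at hx' <;> rw [hx', hmk]
  · exact (alternatingProd_mul_simple cs hci (by rw [← hx']; omega)).symm
  · exact alternatingProd_mul_simple cs hci.symm (by rw [← hx']; omega)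

lemma geomRep_simpleRoot_nonneg_of_mem_pair {i j : S} (hij : i ≠ j) {n : ℕ}
    (hdesc : ∀ y ∈ WP cs {i, j}, cs.length y ≤ n → ∀ c, cs.IsRightDescent y c → c = i ∨ c = j)
    {x : W} (hx : x ∈ WP cs {i, j}) (hn : cs.length x ≤ n) (hnd : ¬ cs.IsRightDescent x i) :
    0 ≤ geomRep cs x (simpleRoot i) := by
  obtain ⟨k, hk⟩ : ∃ k, cs.length x = k := ⟨_, rfl⟩
  rcases eq_alternatingProd_of_forall_isRightDescent cs hdesc hx hn with e | e <;>
    rw [hk] at e <;> subst e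
  · exact geomRep_alternatingProd_simpleRoot_nonneg cs hij
      (lt_coxeter_of_not_isRightDescent cs hk hnd)
  · cases k with
    | zero => simpa using simpleRoot_nonneg i
    | succ k => exact absurd (isRightDescent_alternatingProd_succ cs hk) hnd

lemma exists_mul_forall_not_isRightDescent (I : Set S) (w : W) :
    ∃ u x, x ∈ WP cs I ∧ w = u * x ∧ cs.length w = cs.length u + cs.length x ∧
      ∀ c ∈ I, ¬ cs.IsRightDescent u c := by
  obtain ⟨n, hn⟩ : ∃ n, cs.length w = n := ⟨_, rfl⟩
  induction n using Nat.strong_induction_on generalizing w with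
  | _ n ih =>
  by_cases h : ∃ c ∈ I, cs.IsRightDescent w c
  swap
  · exact ⟨w, 1, one_mem _, (mul_one w).symm, by simp, fun c hc hd => h ⟨c, hc, hd⟩⟩
  obtain ⟨c, hc, hdesc⟩ := h
  obtain ⟨u, x, hx, hux, hlen, hu⟩ := ih _ (hn ▸ hdesc) (w * cs.simple c) rfl
  have hw : w = u * (x * cs.simple c) := by rw [← mul_assoc, ← hux, simple_mul_simple_cancel_right]
  refine ⟨u, x * cs.simple c, mul_mem hx (Subgroup.subset_closure (Set.mem_image_of_mem _ hc)),
    hw, ?_, hu⟩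
  have h1 := cs.isRightDescent_iff.mp hdesc
  have h2 := cs.length_mul_le u (x * cs.simple c)
  have h3 := cs.length_mul_le x (cs.simple c)
  rw [← hw] at h2
  rw [cs.length_simple] at h3
  omega

/-- Positivity of roots is proved by induction on `n`; the induction hypothesis is also what shows
that short elements of a dihedral `W_{i,j}` have their right descents in `{i, j}`, hence are
alternating products. -/
def RootsNonnegBelow (n : ℕ) : Prop :=
  ∀ (w : W) (i : S), cs.length w < n → ¬ cs.IsRightDescent w i → 0 ≤ geomRep cs w (simpleRoot i)

namespace RootsNonnegBelow

variable {cs} {n : ℕ}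

lemma nonpos_of_isRightDescent (h : RootsNonnegBelow cs n) {w : W} {i : S} (hw : cs.length w ≤ n)
    (hd : cs.IsRightDescent w i) : geomRep cs w (simpleRoot i) ≤ 0 := by
  have := h (w * cs.simple i) i (lt_of_lt_of_le hd hw)
    (cs.isRightDescent_iff_not_isRightDescent_mul.mp hd)
  rwa [geomRep_mul_simple_simpleRoot, neg_nonneg] at this

lemma isRightDescent_mem_pair (h : RootsNonnegBelow cs n) {i j : S} {x : W}
    (hx : x ∈ WP cs {i, j}) (hn : cs.length x ≤ n) {c : S} (hc : cs.IsRightDescent x c) :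
    c = i ∨ c = j := by
  by_contra! hcij
  have h0 := (Finsupp.mem_supported' ℝ _).mp (geomRep_sub_mem_supported cs hx (simpleRoot c)) c
    (by simp [hcij.1, hcij.2])
  have h1 := Finsupp.le_def.mp (h.nonpos_of_isRightDescent hn hc) c
  simp [simpleRoot] at h0 h1
  linarith

lemma succ (h : RootsNonnegBelow cs n) : RootsNonnegBelow cs (n + 1) := by
  intro w i hw hnd
  rcases eq_or_ne w 1 with rfl | hw1
  · simpa using simpleRoot_nonneg i
  obtain ⟨j, hj⟩ := cs.exists_rightDescent_of_ne_one hw1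
  have hij : i ≠ j := by rintro rfl; exact hnd hj
  obtain ⟨u, x, hx, rfl, hlen, hu⟩ := exists_mul_forall_not_isRightDescent cs {i, j} w
  have hxi : ¬ cs.IsRightDescent x i := fun hd => hnd <| by
    have := cs.length_mul_le u (x * cs.simple i)
    rw [IsRightDescent, mul_assoc]
    rw [IsRightDescent] at hd
    omega
  have hx1 : x ≠ 1 := by rintro rfl; exact hu j (by simp) (by simpa using hj)
  have hu_lt : cs.length u < n := by
    have := (cs.length_eq_zero_iff (w := x)).not.mpr hx1
    omega
  have hx_nonneg := geomRep_simpleRoot_nonneg_of_mem_pair cs hij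
    (fun y hy hyn c hc => h.isRightDescent_mem_pair hy hyn hc) hx (by omega) hxi
  have hmem : geomRep cs x (simpleRoot i) ∈ Finsupp.supported ℝ ℝ {i, j} :=
    geomRep_mem_supported cs hx (simpleRoot_mem_supported (by simp))
  rw [map_mul, LinearEquiv.mul_apply, eq_smul_add_smul_of_mem_supported_pair hij hmem, map_add,
    map_smul, map_smul]
  exact add_nonneg (smul_nonneg (hx_nonneg i) (h u i hu_lt (hu i (by simp))))
    (smul_nonneg (hx_nonneg j) (h u j hu_lt (hu j (by simp))))

end RootsNonnegBelow

lemma rootsNonnegBelow (n : ℕ) : RootsNonnegBelow cs n := by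
  induction n with
  | zero => exact fun w i hw => absurd hw (Nat.not_lt_zero _)
  | succ n ih => exact ih.succ

theorem geomRep_simpleRoot_nonneg {w : W} {i : S} (h : ¬ cs.IsRightDescent w i) :
    0 ≤ geomRep cs w (simpleRoot i) :=
  rootsNonnegBelow cs _ w i (Nat.lt_succ_self _) h

theorem geomRep_simpleRoot_nonpos {w : W} {i : S} (h : cs.IsRightDescent w i) :
    geomRep cs w (simpleRoot i) ≤ 0 :=
  (rootsNonnegBelow cs _).nonpos_of_isRightDescent le_rfl h

/-! ### Roots of reflections and parabolic subgroups -/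

lemma geomRep_injective : Function.Injective (geomRep cs) := by
  refine (injective_iff_map_eq_one _).mpr fun w hw => ?_
  by_contra hw1
  obtain ⟨c, hc⟩ := cs.exists_rightDescent_of_ne_one hw1
  have := Finsupp.le_def.mp (geomRep_simpleRoot_nonpos cs hc) c
  norm_num [hw, simpleRoot] at this

lemma bform_geomRep_simpleRoot_self (w : W) (c : S) :
    bform M (geomRep cs w (simpleRoot c)) (geomRep cs w (simpleRoot c)) = 1 := by
  simp [bform_geomRep]

lemma conj_simple_eq_of_geomRep_eq_smul {w w' : W} {c c' : S} {r : ℝ}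
    (h : geomRep cs w' (simpleRoot c') = r • geomRep cs w (simpleRoot c)) :
    w' * cs.simple c' * w'⁻¹ = w * cs.simple c * w⁻¹ := by
  have hr : r * r = 1 := by
    have := bform_geomRep_simpleRoot_self cs w' c'
    simp only [h, map_smul, LinearMap.smul_apply, smul_eq_mul, bform_geomRep_simpleRoot_self]
      at this
    linear_combination this
  apply geomRep_injective cs
  ext v : 1
  rw [geomRep_conj_simple_apply, geomRep_conj_simple_apply, h, map_smul, smul_eq_mul, smul_smul]
  congr 2
  linear_combination 2 * bform M v (geomRep cs w (simpleRoot c)) * hr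

lemma mem_of_isRightDescent_conj_simple {I : Set S} {w : W} {c c' : S}
    (h : geomRep cs w (simpleRoot c) ∈ Finsupp.supported ℝ ℝ I)
    (hd : cs.IsRightDescent (w * cs.simple c * w⁻¹) c') : c' ∈ I := by
  by_contra hc'
  have h0 := (Finsupp.mem_supported' ℝ _).mp h c' hc'
  have h1 := Finsupp.le_def.mp (geomRep_simpleRoot_nonpos cs hd) c'
  rw [geomRep_conj_simple_apply, Finsupp.sub_apply, Finsupp.smul_apply, h0] at h1
  norm_num [simpleRoot] at h1

lemma geomRep_simpleRoot_eq_smul {w : W} {i : S} (hd : cs.IsRightDescent w i)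
    (hnd : ¬ cs.IsRightDescent (cs.simple i * w) i) :
    geomRep cs w (simpleRoot i) = geomRep cs w (simpleRoot i) i • simpleRoot i := by
  ext a
  rcases eq_or_ne a i with rfl | ha
  · simp [simpleRoot]
  have h1 := Finsupp.le_def.mp (geomRep_simpleRoot_nonpos cs hd) a
  have h2 := Finsupp.le_def.mp (geomRep_simpleRoot_nonneg cs hnd) a
  simp [map_mul, simpleRefl_apply, simpleRoot, ha.symm] at h1 h2 ⊢
  linarith

lemma length_simple_mul_mul_simple_lt {w : W} {c c' : S}
    (hd : cs.IsRightDescent (w * cs.simple c * w⁻¹) c')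
    (hne : w * cs.simple c * w⁻¹ ≠ cs.simple c') :
    cs.length (cs.simple c' * (w * cs.simple c * w⁻¹) * cs.simple c') <
      cs.length (w * cs.simple c * w⁻¹) := by
  have hinv : (w * cs.simple c * w⁻¹)⁻¹ = w * cs.simple c * w⁻¹ := IsReflection.inv ⟨w, c, rfl⟩
  have hleft : cs.length (cs.simple c' * (w * cs.simple c * w⁻¹)) + 1 =
      cs.length (w * cs.simple c * w⁻¹) := by
    have h1 := cs.isRightDescent_iff.mp hd
    rwa [← cs.length_inv (_ * cs.simple c'), mul_inv_rev, inv_simple, hinv] at h1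
  rcases cs.length_mul_simple (cs.simple c' * (w * cs.simple c * w⁻¹)) c' with hup | hdown
  swap
  · omega
  have hnd : ¬ cs.IsRightDescent (cs.simple c' * (w * cs.simple c * w⁻¹)) c' := by
    rw [IsRightDescent]
    omega
  -- Otherwise, for `t = w s_c w⁻¹`, `σ(t) α_c'` is a nonpositive multiple `γ • α_c'`; then the
  -- root of `t` is proportional to `α_c'`, forcing `t = s_c'`.
  have hγ := geomRep_simpleRoot_eq_smul cs hd hnd
  have hγ_nonpos : geomRep cs (w * cs.simple c * w⁻¹) (simpleRoot c') c' ≤ 0 :=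
    Finsupp.le_def.mp (geomRep_simpleRoot_nonpos cs hd) c'
  set γ := geomRep cs (w * cs.simple c * w⁻¹) (simpleRoot c') c'
  rw [geomRep_conj_simple_apply] at hγ
  have hpar : geomRep cs 1 (simpleRoot c') = ((1 - γ)⁻¹ * (2 * bform M (simpleRoot c')
      (geomRep cs w (simpleRoot c)))) • geomRep cs w (simpleRoot c) := by
    rw [map_one, LinearEquiv.coe_one, id, mul_smul,
      eq_inv_smul_iff₀ (sub_pos.mpr (by linarith)).ne']
    linear_combination (norm := module) hγ
  exact absurd (by simpa using conj_simple_eq_of_geomRep_eq_smul cs hpar) (Ne.symm hne)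

theorem conj_simple_mem_WP_of_geomRep_mem_supported {I : Set S} {w : W} {c : S}
    (h : geomRep cs w (simpleRoot c) ∈ Finsupp.supported ℝ ℝ I) :
    w * cs.simple c * w⁻¹ ∈ WP cs I := by
  obtain ⟨n, hn⟩ : ∃ n, cs.length (w * cs.simple c * w⁻¹) = n := ⟨_, rfl⟩
  induction n using Nat.strong_induction_on generalizing w with
  | _ n ih =>
  have hne1 : w * cs.simple c * w⁻¹ ≠ 1 := fun h1 => by
    simpa [h1] using (IsReflection.odd_length (cs := cs) ⟨w, c, rfl⟩)
  obtain ⟨c', hd⟩ := cs.exists_rightDescent_of_ne_one hne1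
  have hs : cs.simple c' ∈ WP cs I :=
    Subgroup.subset_closure (Set.mem_image_of_mem _ (mem_of_isRightDescent_conj_simple cs h hd))
  by_cases heq : w * cs.simple c * w⁻¹ = cs.simple c'
  · rwa [heq]
  have hconj : cs.simple c' * (w * cs.simple c * w⁻¹) * cs.simple c' =
      cs.simple c' * w * cs.simple c * (cs.simple c' * w)⁻¹ := by
    simp [mul_assoc]
  have hroot : geomRep cs (cs.simple c' * w) (simpleRoot c) ∈ Finsupp.supported ℝ ℝ I := by
    rw [map_mul, LinearEquiv.mul_apply]
    exact geomRep_mem_supported cs hs h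
  have hlt := length_simple_mul_mul_simple_lt cs hd heq
  rw [hconj, hn] at hlt
  have := mul_mem (mul_mem hs (ih _ hlt hroot rfl)) hs
  rwa [← hconj, ← mul_assoc, ← mul_assoc, simple_mul_simple_self, one_mul, mul_assoc,
    simple_mul_simple_self, mul_one] at this

lemma geomRep_mem_supported_of_conj_simple_mem_WP {I : Set S} {w : W} {c : S}
    (h : w * cs.simple c * w⁻¹ ∈ WP cs I) :
    geomRep cs w (simpleRoot c) ∈ Finsupp.supported ℝ ℝ I := by
  have := Submodule.smul_mem _ (-(1 / 2) : ℝ)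
    (geomRep_sub_mem_supported cs h (geomRep cs w (simpleRoot c)))
  rwa [geomRep_conj_simple_apply, bform_geomRep_simpleRoot_self,
    show ∀ β : S →₀ ℝ, (-(1 / 2) : ℝ) • (β - (2 * 1 : ℝ) • β - β) = β from fun β => by module]
    at this

theorem conj_simple_mem_map_conj_WP_iff {I : Set S} {z w : W} {c : S} :
    w * cs.simple c * w⁻¹ ∈ (WP cs I).map (MulAut.conj z).toMonoidHom ↔
      geomRep cs w (simpleRoot c) ∈ (Finsupp.supported ℝ ℝ I).map (geomRep cs z).toLinearMap := by
  rw [Subgroup.mem_map_equiv, Submodule.mem_map_equiv, MulAut.conj_symm_apply,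
    ← LinearEquiv.coe_inv, ← map_inv, ← LinearEquiv.mul_apply, ← map_mul,
    show z⁻¹ * (w * cs.simple c * w⁻¹) * z = z⁻¹ * w * cs.simple c * (z⁻¹ * w)⁻¹ by group]
  exact ⟨geomRep_mem_supported_of_conj_simple_mem_WP cs,
    conj_simple_mem_WP_of_geomRep_mem_supported cs⟩

lemma geomRep_simpleRoot_ne_zero (w : W) (c : S) : geomRep cs w (simpleRoot c) ≠ 0 :=
  (geomRep cs w).map_ne_zero_iff.mpr (Finsupp.single_ne_zero.mpr one_ne_zero)

lemma linearIndependent_geomRep_simpleRoot {w₁ w₂ : W} {c₁ c₂ : S}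
    (hne : w₁ * cs.simple c₁ * w₁⁻¹ ≠ w₂ * cs.simple c₂ * w₂⁻¹) :
    LinearIndependent ℝ ![geomRep cs w₁ (simpleRoot c₁), geomRep cs w₂ (simpleRoot c₂)] :=
  (LinearIndependent.pair_iff' (geomRep_simpleRoot_ne_zero cs w₁ c₁)).mpr fun _ h =>
    hne (conj_simple_eq_of_geomRep_eq_smul cs h.symm).symm

lemma map_supported_pair (z : W) (a b : S) :
    (Finsupp.supported ℝ ℝ {a, b}).map (geomRep cs z).toLinearMap =
      Submodule.span ℝ {geomRep cs z (simpleRoot a), geomRep cs z (simpleRoot b)} := by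
  rw [Finsupp.supported_eq_span_single, Submodule.map_span, Set.image_pair, Set.image_pair]
  rfl

theorem mem_of_two_mem_inter_conj_WP_pair {Q : Subgroup W} (hQ : IsParabolic cs Q) {v : W}
    {a b : S} {t₁ t₂ t : W} (hne : t₁ ≠ t₂)
    (h₁ : t₁ ∈ Refl cs ∩ Q ∩ (WP cs {a, b}).map (MulAut.conj v).toMonoidHom)
    (h₂ : t₂ ∈ Refl cs ∩ Q ∩ (WP cs {a, b}).map (MulAut.conj v).toMonoidHom)
    (ht : t ∈ Refl cs ∩ (WP cs {a, b}).map (MulAut.conj v).toMonoidHom) : t ∈ Q := by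
  obtain ⟨u, I, rfl⟩ := hQ
  obtain ⟨⟨⟨w₁, c₁, rfl⟩, hQ₁⟩, hD₁⟩ := h₁
  obtain ⟨⟨⟨w₂, c₂, rfl⟩, hQ₂⟩, hD₂⟩ := h₂
  obtain ⟨⟨w, c, rfl⟩, hD⟩ := ht
  simp only [SetLike.mem_coe, conj_simple_mem_map_conj_WP_iff, map_supported_pair] at *
  rw [← span_pair_eq_of_linearIndependent hD₁ hD₂ (linearIndependent_geomRep_simpleRoot cs hne)]
    at hD
  exact Submodule.span_le.mpr (Set.insert_subset hQ₁ (Set.singleton_subset_iff.mpr hQ₂)) hD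

end

/-- Let `Q` be a parabolic subgroup and `D = v W_K v⁻¹` a dihedral parabolic subgroup
(`|K| = 2`).  Then `T ∩ Q ∩ D` is empty, or a single reflection, or all of `T ∩ D`. -/
theorem refl_inter_parabolic_dihedral (cs : CoxeterSystem M W) (Q : Subgroup W)
    (hQ : IsParabolic cs Q) (v : W) (K : Set S) (hK : K.ncard = 2)
    (D : Subgroup W) (hD : D = (WP cs K).map (MulAut.conj v).toMonoidHom) :
    Refl cs ∩ ↑Q ∩ ↑D = ∅ ∨ (∃ t : W, Refl cs ∩ ↑Q ∩ ↑D = {t}) ∨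
      Refl cs ∩ ↑Q ∩ ↑D = Refl cs ∩ ↑D := by
  obtain ⟨a, b, -, rfl⟩ := Set.ncard_eq_two.mp hK
  subst hD
  rcases (Refl cs ∩ ↑Q ∩ _).subsingleton_or_nontrivial with hs | ⟨t₁, h₁, t₂, h₂, hne⟩
  · exact hs.eq_empty_or_singleton.imp_right Or.inl
  refine Or.inr (Or.inr (subset_antisymm (fun t ht => ⟨ht.1.1, ht.2⟩) fun t ht => ?_))
  exact ⟨⟨ht.1, mem_of_two_mem_inter_conj_WP_pair cs hQ hne h₁ h₂ ht⟩, ht.2⟩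

end DGM
end

section
/- There exists a group homomorphism f : B → (⊕_{t∈T} ℤ) ⋊ W, where W acts on the free abelian group ⊕_{t∈T} ℤ of finitely supported functions T → ℤ by permuting the basis according to its conjugation action on T, such that f(σ_s) = (δ_s, s) for every s ∈ S, where δ_s is the basis element supported at s. -/
/-!
Send `σ_s` to `(δ_s, s)`. A positive word `ω` then maps to `(∑ δ_t, π ω)`, the sum running over
the left inversion sequence `t₁ = s₁, t₂ = s₁ s₂ s₁, …` of `ω`. For the two braid words of
length `m = M s t` these sequences both list the `m` reflections `(st)ᵏ s` of the dihedral
subgroup `⟨s, t⟩`, one in the reverse order of the other because `(st)ᵐ = 1`; hence both sides of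
every braid relation have the same image.
-/

open scoped Classical

namespace DGM

variable {S : Type*} {W : Type*} [Group W] {M : CoxeterMatrix S}

/-- The braid relators defining the Artin group of the Coxeter matrix `M`:
for `s ≠ t` with `m := M s t` finite (i.e. nonzero), the alternating product
`σ_s σ_t σ_s ⋯` with `m` factors equals the alternating product with `m` factors
of the letters in the other order. -/
def artinRels (M : CoxeterMatrix S) : Set (FreeGroup S) :=
  {r | ∃ s t : S, s ≠ t ∧ M s t ≠ 0 ∧
    r = ((CoxeterSystem.alternatingWord s t (M s t)).map FreeGroup.of).prod *
        (((CoxeterSystem.alternatingWord t s (M s t)).map FreeGroup.of).prod)⁻¹}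

/-- The Artin group `B` of the Coxeter matrix `M`. -/
abbrev ArtinGroup (M : CoxeterMatrix S) : Type _ := PresentedGroup (artinRels M)

/-- The generator `σ_s` of the Artin group. -/
def sigma (M : CoxeterMatrix S) (s : S) : ArtinGroup M := PresentedGroup.of s

/-- The element `σ_{s₁}^{ε₁} ⋯ σ_{s_k}^{ε_k}` of the Artin group represented by a word
on `S × {±1}`. -/
def wordToB (M : CoxeterMatrix S) (b : List (S × Bool)) : ArtinGroup M :=
  (b.map (fun p => if p.2 then sigma M p.1 else (sigma M p.1)⁻¹)).prod

end DGM

namespace CoxeterSystem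

open List

variable {B W : Type*} [Group W] {M : CoxeterMatrix B} (cs : CoxeterSystem M W)

theorem getElem_leftInvSeq_alternatingWord' (i j : B) (m k : ℕ) (hk : k < m) :
    (cs.leftInvSeq (alternatingWord i j m))[k]'(by simpa) =
      cs.wordProd (if Even m then alternatingWord j i (2 * k + 1)
        else alternatingWord i j (2 * k + 1)) := by
  have hm : m < 2 * m := by lia
  by_cases h : Even m
  · have hw := listTake_alternatingWord i j m m hm
    simp only [h, if_true] at hw ⊢
    simp only [← hw, leftInvSeq_take, getElem_take]
    exact cs.getElem_leftInvSeq_alternatingWord i j m k (by lia)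
  · have hw := listTake_alternatingWord j i m m hm
    simp only [h, if_false] at hw ⊢
    simp only [← hw, leftInvSeq_take, getElem_take]
    exact cs.getElem_leftInvSeq_alternatingWord j i m k (by lia)

theorem leftInvSeq_braidWord_eq_reverse (i i' : B) :
    cs.leftInvSeq (braidWord M i' i) = (cs.leftInvSeq (braidWord M i i')).reverse := by
  have hsymm : M i' i = M i i' := M.symmetric i' i
  apply List.ext_getElem (by simp [hsymm])
  intro k hk _
  simp only [length_leftInvSeq, length_alternatingWord] at hk
  rw [getElem_reverse, getElem_leftInvSeq_alternatingWord' _ _ _ _ _ hk,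
    getElem_leftInvSeq_alternatingWord' _ _ _ _ _ (by simp; lia)]
  simp only [length_leftInvSeq, length_alternatingWord, hsymm] at hk ⊢
  have hk' : 2 * (M i i' - 1 - k) + 1 = M i i' * 2 - (2 * k + 1) := by lia
  split_ifs
  · rw [hk', cs.prod_alternatingWord_eq_prod_alternatingWord_sub i i' _ (by lia)]
  · rw [hk', ← hsymm, cs.prod_alternatingWord_eq_prod_alternatingWord_sub i' i _ (by lia)]

instance : MulAction W {t : W // cs.IsReflection t} where
  smul w t := ⟨w * t * w⁻¹, t.2.conj w⟩
  one_smul t := Subtype.ext (by simp : (1 : W) * t * 1⁻¹ = t)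
  mul_smul w w' t := Subtype.ext (by group : w * w' * t * (w * w')⁻¹ = w * (w' * t * w'⁻¹) * w⁻¹)

theorem val_comp_smul_reflection (w : W) :
    Subtype.val ∘ (w • · : {t : W // cs.IsReflection t} → _) = MulAut.conj w ∘ Subtype.val :=
  rfl

attribute [local instance] Finsupp.comapDistribMulAction

noncomputable def reflectionAction :
    W →* MulAut (Multiplicative ({t : W // cs.IsReflection t} →₀ ℤ)) :=
  (MulAutMultiplicative _).symm.toMonoidHom.comp (DistribMulAction.toAddAut W _)

theorem toAdd_reflectionAction (w : W) (x : Multiplicative ({t : W // cs.IsReflection t} →₀ ℤ)) :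
    (cs.reflectionAction w x).toAdd = w • x.toAdd :=
  rfl

noncomputable def simpleImage (i : B) :
    Multiplicative ({t : W // cs.IsReflection t} →₀ ℤ) ⋊[cs.reflectionAction] W :=
  ⟨.ofAdd (Finsupp.single ⟨cs.simple i, cs.isReflection_simple i⟩ 1), cs.simple i⟩

theorem right_prod_map_simpleImage (ω : List B) :
    (ω.map cs.simpleImage).prod.right = cs.wordProd ω := by
  induction ω with
  | nil => rfl
  | cons i ω ih => simp [simpleImage, wordProd_cons, ih]

theorem mapDomain_left_prod_map_simpleImage (ω : List B) :
    Finsupp.mapDomain Subtype.val (ω.map cs.simpleImage).prod.left.toAdd =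
      ((cs.leftInvSeq ω).map (Finsupp.single · 1)).sum := by
  induction ω with
  | nil => simp
  | cons i ω ih =>
    rw [map_cons, prod_cons, SemidirectProduct.mul_left, toAdd_mul, toAdd_reflectionAction,
      Finsupp.mapDomain_add, Finsupp.comapSMul_def, ← Finsupp.mapDomain_comp,
      val_comp_smul_reflection, Finsupp.mapDomain_comp, ih, leftInvSeq, map_cons, sum_cons,
      map_map]
    congr 1
    · exact Finsupp.mapDomain_single
    · rw [← Finsupp.mapDomain.addMonoidHom_apply, map_list_sum, map_map]
      simp [simpleImage, Function.comp_def]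

theorem prod_map_simpleImage_braidWord (i i' : B) :
    ((braidWord M i i').map cs.simpleImage).prod =
      ((braidWord M i' i).map cs.simpleImage).prod := by
  ext : 1
  · apply Multiplicative.toAdd.injective
    apply Finsupp.mapDomain_injective Subtype.val_injective
    rw [mapDomain_left_prod_map_simpleImage, mapDomain_left_prod_map_simpleImage,
      leftInvSeq_braidWord_eq_reverse, map_reverse, sum_reverse]
  · rw [right_prod_map_simpleImage, right_prod_map_simpleImage, wordProd_braidWord_eq]

end CoxeterSystem

namespace DGM

variable {S : Type*} {W : Type*} [Group W] {M : CoxeterMatrix S}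

theorem lift_simpleImage_eq_one_of_mem_artinRels (cs : CoxeterSystem M W) :
    ∀ r ∈ artinRels M, FreeGroup.lift cs.simpleImage r = 1 := by
  rintro r ⟨s, t, -, -, rfl⟩
  have hbraid := cs.prod_map_simpleImage_braidWord s t
  rw [CoxeterSystem.braidWord, CoxeterSystem.braidWord, M.symmetric t s] at hbraid
  simpa [map_list_prod, Function.comp_def, mul_inv_eq_one] using hbraid

/-- There is a group homomorphism `f : B → (⊕_{t ∈ T} ℤ) ⋊ W` (where `W` permutes the
basis of the free abelian group on the set `T` of reflections by conjugation) with
`f(σ_s) = (δ_s, s)` for all `s ∈ S`.  Here the semidirect product is encoded concretely: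
`f` is a map to pairs satisfying the semidirect-product multiplication rule. -/
theorem exists_N_hom (cs : CoxeterSystem M W) :
    ∃ f : ArtinGroup M → ({t : W // cs.IsReflection t} →₀ ℤ) × W,
      (∀ x y : ArtinGroup M,
        f (x * y) =
          ((f x).1 + Finsupp.mapDomain
              (fun t : {t : W // cs.IsReflection t} =>
                (⟨(f x).2 * t.1 * (f x).2⁻¹, t.2.conj (f x).2⟩ :
                  {t : W // cs.IsReflection t}))
              (f y).1,
            (f x).2 * (f y).2)) ∧
      (∀ s : S,
        f (sigma M s) =
          (Finsupp.single ⟨cs.simple s, cs.isReflection_simple s⟩ 1, cs.simple s)) := by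
  let E := PresentedGroup.toGroup (lift_simpleImage_eq_one_of_mem_artinRels cs)
  refine ⟨fun x => ((E x).left.toAdd, (E x).right), fun x y => ?_, fun s => ?_⟩
  · simp only [map_mul, SemidirectProduct.mul_left, SemidirectProduct.mul_right, toAdd_mul]
    rfl
  · simp only [sigma, E, PresentedGroup.toGroup.of]
    rfl

end DGM
end
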